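/- arXiv:math/0505048 — 9 statements merged into one kernel-verified Lean document; each statement's English description precedes it below -/
import Mathlib

section
/- For any simple graph G and any vertex v of G, the number of maximal independent sets of G is at most the number of maximal independent sets of G - v plus the number of maximal independent sets of G - N[v], where N[v] is the closed neighborhood of v. -/
attribute [local instance] Classical.propDecidable

/-- `s` is an independent set of vertices of `G`. -/
def IsIndep {V : Type*} (G : SimpleGraph V) (s : Finset V) : Prop :=
  ∀ u ∈ s, ∀ v ∈ s, ¬ G.Adj u v

/-- `s` is a maximal independent set of vertices of `G`. -/
def IsMaxlIndep {V : Type*} (G : SimpleGraph V) (s : Finset V) : Prop :=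
  IsIndep G s ∧ ∀ t : Finset V, IsIndep G t → s ⊆ t → s = t

/-- `m(G)`: the number of maximal independent sets of `G`. -/
noncomputable def numMaxlIndep {V : Type*} [Fintype V] (G : SimpleGraph V) : ℕ :=
  Set.ncard {s : Finset V | IsMaxlIndep G s}

lemma indep_image {V : Type*} (G : SimpleGraph V) (S : Set V) (t : Finset S)
    (h : IsIndep (G.induce S) t) : IsIndep G (t.image Subtype.val) := by
  intro a ha b hb
  simp only [Finset.mem_image] at ha hb
  obtain ⟨a', ha', rfl⟩ := ha
  obtain ⟨b', hb', rfl⟩ := hb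
  exact h a' ha' b' hb'

lemma mem_image_val {V : Type*} (S : Set V) (t : Finset S) (x : S) :
    (x : V) ∈ t.image Subtype.val ↔ x ∈ t := by
  simp only [Finset.mem_image]
  constructor
  · rintro ⟨a, ha, hav⟩; rwa [Subtype.ext hav] at ha
  · exact fun hx => ⟨x, hx, rfl⟩

lemma maxA {V : Type*} (G : SimpleGraph V) (v : V) (s : Finset V)
    (hs : IsMaxlIndep G s) (hv : v ∉ s) :
    IsMaxlIndep (G.induce {u | u ≠ v}) (s.subtype (· ∈ {u | u ≠ v})) := by
  constructor
  · intro a ha b hb hab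
    simp only [Finset.mem_subtype] at ha hb
    exact hs.1 _ ha _ hb hab
  · intro t ht hsub
    set t' := t.image Subtype.val with ht'def
    have ht' : IsIndep G t' := indep_image G _ t ht
    have hst' : s ⊆ t' := by
      intro u hu
      have huv : u ∈ {u | u ≠ v} := fun h => hv (h ▸ hu)
      have : (⟨u, huv⟩ : {u | u ≠ v}) ∈ s.subtype (· ∈ {u | u ≠ v}) := by
        simp [Finset.mem_subtype, hu]
      have := hsub this
      exact Finset.mem_image.2 ⟨_, this, rfl⟩
    have heq := hs.2 t' ht' hst'
    ext x
    rw [Finset.mem_subtype, heq, ht'def, mem_image_val]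

lemma maxB {V : Type*} (G : SimpleGraph V) (v : V) (s : Finset V)
    (hs : IsMaxlIndep G s) (hv : v ∈ s) :
    IsMaxlIndep (G.induce {u | u ≠ v ∧ ¬ G.Adj v u})
      ((s.erase v).subtype (· ∈ {u | u ≠ v ∧ ¬ G.Adj v u})) := by
  have hmem : ∀ u ∈ s.erase v, u ∈ {u | u ≠ v ∧ ¬ G.Adj v u} := by
    intro u hu
    exact ⟨Finset.ne_of_mem_erase hu, hs.1 v hv u (Finset.mem_of_mem_erase hu)⟩
  constructor
  · intro a ha b hb hab
    simp only [Finset.mem_subtype] at ha hb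
    exact hs.1 _ (Finset.mem_of_mem_erase ha) _ (Finset.mem_of_mem_erase hb) hab
  · intro t ht hsub
    set t' := insert v (t.image Subtype.val) with ht'def
    have hvt : ∀ x ∈ t.image Subtype.val, x ≠ v ∧ ¬ G.Adj v x := by
      intro x hx
      obtain ⟨a, _, rfl⟩ := Finset.mem_image.1 hx
      exact a.2
    have ht' : IsIndep G t' := by
      intro a ha b hb hab
      rcases Finset.mem_insert.1 ha with rfl | ha'
      · rcases Finset.mem_insert.1 hb with rfl | hb'
        · exact G.loopless.irrefl _ hab
        · exact (hvt b hb').2 hab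
      · rcases Finset.mem_insert.1 hb with rfl | hb'
        · exact (hvt a ha').2 (hab.symm)
        · exact indep_image G _ t ht a ha' b hb' hab
    have hst' : s ⊆ t' := by
      intro u hu
      by_cases huv : u = v
      · exact huv ▸ Finset.mem_insert_self v _
      · have hue : u ∈ s.erase v := Finset.mem_erase.2 ⟨huv, hu⟩
        have hp := hmem u hue
        have : (⟨u, hp⟩ : {u | u ≠ v ∧ ¬ G.Adj v u}) ∈
            (s.erase v).subtype (· ∈ {u | u ≠ v ∧ ¬ G.Adj v u}) := by
          simp [Finset.mem_subtype, hue]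
        exact Finset.mem_insert.2 (Or.inr (Finset.mem_image.2 ⟨_, hsub this, rfl⟩))
    have heq := hs.2 t' ht' hst'
    ext x
    rw [Finset.mem_subtype, Finset.mem_erase, heq, ht'def]
    constructor
    · rintro ⟨hxv, hx⟩
      rcases Finset.mem_insert.1 hx with h | h
      · exact absurd h hxv
      · exact (mem_image_val _ t x).1 h
    · intro hx
      exact ⟨x.2.1, Finset.mem_insert.2 (Or.inr ((mem_image_val _ t x).2 hx))⟩

/-- The m-bound: `m(G) ≤ m(G - v) + m(G - N[v])`. -/
theorem stmt0 {V : Type*} [Fintype V] (G : SimpleGraph V) (v : V) :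
    numMaxlIndep G ≤
      numMaxlIndep (G.induce {u | u ≠ v}) +
        numMaxlIndep (G.induce {u | u ≠ v ∧ ¬ G.Adj v u}) := by
  classical
  set A : Set (Finset V) := {s | IsMaxlIndep G s ∧ v ∉ s} with hA
  set B : Set (Finset V) := {s | IsMaxlIndep G s ∧ v ∈ s} with hB
  have hsplit : {s : Finset V | IsMaxlIndep G s} = A ∪ B := by
    ext s
    by_cases h : v ∈ s <;> simp [hA, hB, h]
  have h1 : A.ncard ≤ numMaxlIndep (G.induce {u | u ≠ v}) := by
    refine Set.ncard_le_ncard_of_injOn (fun s => s.subtype (· ∈ {u | u ≠ v})) ?_ ?_ (Set.toFinite _)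
    · intro s hs
      exact maxA G v s hs.1 hs.2
    · intro s hs s' hs' h
      ext u
      by_cases huv : u = v
      · subst huv; simp [hs.2, hs'.2]
      · have := Finset.ext_iff.1 h ⟨u, huv⟩
        simpa [Finset.mem_subtype] using this
  have h2 : B.ncard ≤ numMaxlIndep (G.induce {u | u ≠ v ∧ ¬ G.Adj v u}) := by
    refine Set.ncard_le_ncard_of_injOn
      (fun s => (s.erase v).subtype (· ∈ {u | u ≠ v ∧ ¬ G.Adj v u})) ?_ ?_ (Set.toFinite _)
    · intro s hs
      exact maxB G v s hs.1 hs.2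
    · intro s hs s' hs' h
      have he : s.erase v = s'.erase v := by
        ext u
        by_cases huv : u = v
        · subst huv; simp
        · constructor
          · intro hu
            have hq : u ∈ {u | u ≠ v ∧ ¬ G.Adj v u} :=
              ⟨huv, hs.1.1 v hs.2 u (Finset.mem_of_mem_erase hu)⟩
            have := Finset.ext_iff.1 h ⟨u, hq⟩
            simp only [Finset.mem_subtype] at this
            exact this.1 hu
          · intro hu
            have hq : u ∈ {u | u ≠ v ∧ ¬ G.Adj v u} :=
              ⟨huv, hs'.1.1 v hs'.2 u (Finset.mem_of_mem_erase hu)⟩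
            have := Finset.ext_iff.1 h ⟨u, hq⟩
            simp only [Finset.mem_subtype] at this
            exact this.2 hu
      calc s = insert v (s.erase v) := (Finset.insert_erase hs.2).symm
        _ = insert v (s'.erase v) := by rw [he]
        _ = s' := Finset.insert_erase hs'.2
  calc numMaxlIndep G = (A ∪ B).ncard := by rw [numMaxlIndep, hsplit]
    _ ≤ A.ncard + B.ncard := Set.ncard_union_le A B
    _ ≤ _ := Nat.add_le_add h1 h2
end

section
/- If a finite simple graph G contains a complete subgraph B having at least one vertex adjacent in G only to other vertices of B, then m(G) = Σ_{v ∈ V(B)} m(G - N[v]), where m counts maximal independent sets. -/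
attribute [local instance] Classical.propDecidable

/-! A maximal independent set is exactly an independent set that dominates every vertex
outside it. So each one meets `N[v] ⊆ B` for the vertex `v` whose neighbours lie in `B`, and
since `B` is a clique it meets `B` in exactly one vertex `w`. The maximal independent sets
containing `w` correspond to those of `G - N[w]`: delete `w`, or insert it back. -/

open Finset

lemma Finset.card_eq_sum_card_filter_mem {α : Type*} [DecidableEq α] {S : Finset (Finset α)}
    {B : Finset α} (h : ∀ s ∈ S, #(B ∩ s) = 1) : #S = ∑ v ∈ B, #{s ∈ S | v ∈ s} := by
  simp_rw [card_eq_sum_ones, sum_filter]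
  rw [sum_comm]
  refine sum_congr rfl fun s hs => ?_
  rw [← sum_filter, ← card_eq_sum_ones, filter_mem_eq_inter, h s hs]

section
variable {V : Type*} {G : SimpleGraph V} {s : Finset V}

lemma IsIndep.insert {v : V} (hs : IsIndep G s) (hv : ∀ u ∈ s, ¬ G.Adj v u) :
    IsIndep G (insert v s) := by
  intro x hx y hy hxy
  rw [mem_insert] at hx hy
  rcases hx with rfl | hx <;> rcases hy with rfl | hy
  · exact G.irrefl hxy
  · exact hv y hy hxy
  · exact hv x hx hxy.symm
  · exact hs x hx y hy hxy

lemma isMaxlIndep_iff_forall_notMem_exists_adj :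
    IsMaxlIndep G s ↔ IsIndep G s ∧ ∀ u ∉ s, ∃ w ∈ s, G.Adj u w := by
  refine and_congr_right fun hs => ⟨fun hmax u hu => ?_, fun hdom t ht hst => ?_⟩
  · by_contra! h
    exact hu (hmax _ (hs.insert h) (subset_insert u s) ▸ mem_insert_self u s)
  · refine hst.antisymm fun u hut => ?_
    by_contra hus
    obtain ⟨w, hws, huw⟩ := hdom u hus
    exact ht u hut w (hst hws) huw

lemma IsMaxlIndep.exists_mem_of_adj_subset (hs : IsMaxlIndep G s) {v : V} {B : Finset V}
    (hvB : v ∈ B) (hB : ∀ u, G.Adj v u → u ∈ B) : ∃ w ∈ B, w ∈ s := by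
  by_cases hv : v ∈ s
  · exact ⟨v, hvB, hv⟩
  · obtain ⟨w, hws, hvw⟩ := (isMaxlIndep_iff_forall_notMem_exists_adj.1 hs).2 v hv
    exact ⟨w, hB w hvw, hws⟩

lemma IsIndep.card_inter_le_one {B : Finset V} (hs : IsIndep G s) (hB : G.IsClique (B : Set V)) :
    #(B ∩ s) ≤ 1 := by
  refine card_le_one.2 fun x hx y hy => ?_
  rw [mem_inter] at hx hy
  by_contra hxy
  exact hs x hx.2 y hy.2 (hB hx.1 hy.1 hxy)

lemma IsMaxlIndep.card_inter_eq_one {B : Finset V} (hs : IsMaxlIndep G s)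
    (hB : G.IsClique (B : Set V)) {v : V} (hvB : v ∈ B) (hN : ∀ u, G.Adj v u → u ∈ B) :
    #(B ∩ s) = 1 := by
  obtain ⟨w, hwB, hws⟩ := hs.exists_mem_of_adj_subset hvB hN
  exact le_antisymm (hs.1.card_inter_le_one hB) (card_pos.2 ⟨w, mem_inter.2 ⟨hwB, hws⟩⟩)

end

section
variable {V : Type*} {G : SimpleGraph V} {v : V}

-- the vertex set of `G - N[v]`
def outsideClosedNbhd (G : SimpleGraph V) (v : V) : Set V := {u | u ≠ v ∧ ¬ G.Adj v u}

local notation "P" => outsideClosedNbhd G v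
local notation "emb" => Function.Embedding.subtype (· ∈ P)

lemma subtype_insert_map (t : Finset P) : (insert v (t.map emb)).subtype (· ∈ P) = t := by
  ext a
  have hav : (a : V) ≠ v := a.2.1
  simp [hav]

lemma insert_map_subtype {s : Finset V} (hs : IsIndep G s) (hv : v ∈ s) :
    insert v ((s.subtype (· ∈ P)).map emb) = s := by
  ext u
  rw [subtype_map, mem_insert, mem_filter]
  by_cases huv : u = v
  · simp [huv, hv]
  · exact ⟨fun h => h.resolve_left huv |>.1,
      fun hu => Or.inr ⟨hu, huv, hs v hv u hu⟩⟩

lemma isMaxlIndep_insert_map {t : Finset P} (ht : IsMaxlIndep (G.induce P) t) :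
    IsMaxlIndep G (insert v (t.map emb)) := by
  obtain ⟨hind, hdom⟩ := isMaxlIndep_iff_forall_notMem_exists_adj.1 ht
  refine isMaxlIndep_iff_forall_notMem_exists_adj.2 ⟨IsIndep.insert ?_ ?_, fun u hu => ?_⟩
  · intro x hx y hy
    obtain ⟨a, ha, rfl⟩ := mem_map.1 hx
    obtain ⟨b, hb, rfl⟩ := mem_map.1 hy
    exact hind a ha b hb
  · intro x hx
    obtain ⟨a, -, rfl⟩ := mem_map.1 hx
    exact a.2.2
  · rw [mem_insert, not_or] at hu
    by_cases huv : G.Adj u v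
    · exact ⟨v, mem_insert_self _ _, huv⟩
    · have huP : u ∈ P := ⟨hu.1, fun h => huv h.symm⟩
      obtain ⟨w, hwt, huw⟩ := hdom ⟨u, huP⟩ fun h => hu.2 (mem_map_of_mem _ h)
      exact ⟨w, mem_insert_of_mem (mem_map_of_mem _ hwt), huw⟩

lemma IsMaxlIndep.subtype_of_mem {s : Finset V} (hs : IsMaxlIndep G s) (hv : v ∈ s) :
    IsMaxlIndep (G.induce P) (s.subtype (· ∈ P)) := by
  obtain ⟨hind, hdom⟩ := isMaxlIndep_iff_forall_notMem_exists_adj.1 hs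
  refine isMaxlIndep_iff_forall_notMem_exists_adj.2
    ⟨fun a ha b hb => hind a (mem_subtype.1 ha) b (mem_subtype.1 hb), fun a ha => ?_⟩
  obtain ⟨w, hws, haw⟩ := hdom a (mem_subtype.not.1 ha)
  have hw : w ∈ P := ⟨fun h => a.2.2 (h ▸ haw.symm), hind v hv w hws⟩
  exact ⟨⟨w, hw⟩, mem_subtype.2 hws, haw⟩

lemma ncard_isMaxlIndep_mem :
    {s : Finset V | IsMaxlIndep G s ∧ v ∈ s}.ncard =
      {t : Finset P | IsMaxlIndep (G.induce P) t}.ncard := by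
  symm
  refine Set.ncard_congr (fun t _ => insert v (t.map emb))
    (fun t ht => ⟨isMaxlIndep_insert_map ht, mem_insert_self _ _⟩) ?_ ?_
  · intro a b _ _ hab
    rw [← subtype_insert_map a, hab, subtype_insert_map]
  · rintro s ⟨hs, hv⟩
    exact ⟨_, hs.subtype_of_mem hv, insert_map_subtype hs.1 hv⟩

end

/-- The m-recursion for a complete subgraph `B` with a vertex adjacent only to
vertices of `B`: `m(G) = Σ_{v ∈ B} m(G - N[v])`. -/
theorem stmt1 {V : Type*} [Fintype V] (G : SimpleGraph V) (B : Finset V)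
    (hB : G.IsClique (B : Set V))
    (hv : ∃ v ∈ B, ∀ u : V, G.Adj v u → u ∈ B) :
    numMaxlIndep G =
      ∑ v ∈ B, numMaxlIndep (G.induce {u | u ≠ v ∧ ¬ G.Adj v u}) := by
  obtain ⟨v₀, hv₀B, hN⟩ := hv
  have hncard (p : Finset V → Prop) [DecidablePred p] : {s | p s}.ncard = #{s | p s} := by
    rw [Set.ncard_eq_toFinset_card', Set.toFinset_ofPred]
  calc numMaxlIndep G = #{s | IsMaxlIndep G s} := hncard _
    _ = ∑ v ∈ B, #{s ∈ {s | IsMaxlIndep G s} | v ∈ s} :=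
      card_eq_sum_card_filter_mem fun s hs =>
        (mem_filter.1 hs).2.card_inter_eq_one hB hv₀B hN
    _ = _ := sum_congr rfl fun v _ => by
      rw [filter_filter, ← hncard, ncard_isMaxlIndep_mem]
      rfl
end

section
/- If two vertices u and v of a finite simple graph G are duplicated, i.e., N(u) = N(v), then m(G) = m(G - v), where m counts maximal independent sets. -/
attribute [local instance] Classical.propDecidable

/-- If `u` and `v` are duplicated vertices (same open neighborhood) then
`m(G) = m(G - v)`. -/
theorem stmt2 {V : Type*} [Fintype V] (G : SimpleGraph V) (u v : V)
    (huv : u ≠ v) (hdup : G.neighborSet u = G.neighborSet v) :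
    numMaxlIndep G = numMaxlIndep (G.induce {w | w ≠ v}) := by
  classical
  set S : Set V := {w | w ≠ v} with hS
  set H : SimpleGraph ↥S := G.induce S with hH
  have hadj : ∀ w, G.Adj u w ↔ G.Adj v w := by
    intro w
    rw [← SimpleGraph.mem_neighborSet, ← SimpleGraph.mem_neighborSet, hdup]
  have hnuv : ¬ G.Adj u v := fun h => G.loopless.irrefl v ((hadj v).1 h)
  have hHadj : ∀ a b : ↥S, (H.Adj a b ↔ G.Adj ↑a ↑b) := by
    intro a b; simp [hH, SimpleGraph.comap_adj]
  -- the forward map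
  set F : Finset V → Finset ↥S := fun s => s.subtype (fun w => w ∈ S) with hF
  have hmemF : ∀ (s : Finset V) (a : ↥S), a ∈ F s ↔ ↑a ∈ s := by
    intro s a; simp [hF]
  have hFmono : ∀ s t : Finset V, s ⊆ t → F s ⊆ F t := by
    intro s t hst a ha
    rw [hmemF] at ha ⊢; exact hst ha
  have hFindep : ∀ s : Finset V, IsIndep G s → IsIndep H (F s) := by
    intro s hi a ha b hb hab
    rw [hmemF] at ha hb
    exact hi _ ha _ hb ((hHadj a b).1 hab)
  -- u ∈ s ↔ v ∈ s for maximal independent sets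
  have key : ∀ s : Finset V, IsMaxlIndep G s → (u ∈ s ↔ v ∈ s) := by
    intro s ⟨hi, hm⟩
    have step : ∀ a b : V, (∀ w, G.Adj a w ↔ G.Adj b w) → a ∈ s → b ∈ s := by
      intro a b hab ha
      have hind : IsIndep G (insert b s) := by
        intro x hx y hy
        rw [Finset.mem_insert] at hx hy
        rcases hx with rfl | hx <;> rcases hy with rfl | hy
        · exact G.loopless.irrefl _
        · intro h; exact hi a ha y hy ((hab y).2 h)
        · intro h; exact hi a ha x hx ((hab x).2 h.symm)
        · exact hi x hx y hy
      have := hm _ hind (Finset.subset_insert _ _)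
      rw [this]; exact Finset.mem_insert_self _ _
    constructor
    · exact step u v (fun w => by rw [hadj w])
    · exact step v u (fun w => by rw [hadj w])
  set A : Set (Finset V) := {s | IsMaxlIndep G s} with hA
  set B : Set (Finset ↥S) := {s | IsMaxlIndep H s} with hB
  have huS : u ∈ S := huv
  -- forward map sends A into B
  have hmaps : Set.MapsTo F A B := by
    rintro s ⟨hi, hm⟩
    refine ⟨hFindep s hi, ?_⟩
    intro t ht hsub
    set t' : Finset V := t.map ⟨Subtype.val, Subtype.val_injective⟩ with ht'
    have hmem' : ∀ x : V, x ∈ t' → ∃ b : ↥S, b ∈ t ∧ ↑b = x := by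
      intro x hx
      rw [ht', Finset.mem_map] at hx
      obtain ⟨b, hb, rfl⟩ := hx
      exact ⟨b, hb, rfl⟩
    have hmix : ∀ a ∈ s, ∀ x ∈ t', ¬ G.Adj a x := by
      intro a ha x hx
      obtain ⟨b, hb, rfl⟩ := hmem' x hx
      by_cases hav : a = v
      · subst hav
        have hu : u ∈ s := (key s ⟨hi, hm⟩).2 ha
        have : (⟨u, huS⟩ : ↥S) ∈ t := hsub ((hmemF s _).2 hu)
        intro h
        exact ht _ this _ hb ((hHadj _ _).2 ((hadj ↑b).2 h))
      · have : (⟨a, hav⟩ : ↥S) ∈ t := hsub ((hmemF s _).2 ha)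
        intro h
        exact ht _ this _ hb ((hHadj _ _).2 h)
    have hind : IsIndep G (s ∪ t') := by
      intro x hx y hy
      rw [Finset.mem_union] at hx hy
      rcases hx with hx | hx <;> rcases hy with hy | hy
      · exact hi x hx y hy
      · exact hmix x hx y hy
      · intro h; exact hmix y hy x hx h.symm
      · obtain ⟨b, hb, rfl⟩ := hmem' x hx
        obtain ⟨c, hc, rfl⟩ := hmem' y hy
        intro h
        exact ht _ hb _ hc ((hHadj _ _).2 h)
    have hse : s = s ∪ t' := hm _ hind Finset.subset_union_left
    have htsub : t ⊆ F s := by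
      intro b hb
      rw [hmemF]
      have : (↑b : V) ∈ t' := by
        rw [ht', Finset.mem_map]; exact ⟨b, hb, rfl⟩
      have : (↑b : V) ∈ s ∪ t' := Finset.mem_union_right _ this
      rwa [← hse] at this
    exact Finset.Subset.antisymm hsub htsub
  -- injectivity
  have hinj : Set.InjOn F A := by
    intro s₁ h₁ s₂ h₂ he
    ext w
    by_cases hw : w = v
    · subst hw
      rw [← key s₁ h₁, ← key s₂ h₂]
      have := congrArg (fun t => (⟨u, huS⟩ : ↥S) ∈ t) he
      simpa [hmemF] using this
    · have := congrArg (fun t => (⟨w, hw⟩ : ↥S) ∈ t) he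
      simpa [hmemF] using this
  -- surjectivity
  have hsurj : Set.SurjOn F A B := by
    rintro t ⟨hti, htm⟩
    set t' : Finset V := t.map ⟨Subtype.val, Subtype.val_injective⟩ with ht'
    have hmem' : ∀ x : V, x ∈ t' → ∃ b : ↥S, b ∈ t ∧ ↑b = x := by
      intro x hx
      rw [ht', Finset.mem_map] at hx
      obtain ⟨b, hb, rfl⟩ := hx
      exact ⟨b, hb, rfl⟩
    have hmem'' : ∀ b : ↥S, b ∈ t ↔ (↑b : V) ∈ t' := by
      intro b
      constructor
      · intro hb; rw [ht', Finset.mem_map]; exact ⟨b, hb, rfl⟩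
      · intro hb; obtain ⟨c, hc, hcb⟩ := hmem' _ hb
        have : c = b := Subtype.ext hcb
        rwa [← this]
    have htne : ∀ x ∈ t', x ≠ v := by
      intro x hx; obtain ⟨b, _, rfl⟩ := hmem' x hx; exact b.2
    have ht'i : IsIndep G t' := by
      intro x hx y hy
      obtain ⟨b, hb, rfl⟩ := hmem' x hx
      obtain ⟨c, hc, rfl⟩ := hmem' y hy
      intro h
      exact hti _ hb _ hc ((hHadj _ _).2 h)
    by_cases hu' : u ∈ t'
    · -- s = insert v t'
      refine ⟨insert v t', ?_, ?_⟩
      · have hind : IsIndep G (insert v t') := by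
          intro x hx y hy
          rw [Finset.mem_insert] at hx hy
          rcases hx with rfl | hx <;> rcases hy with rfl | hy
          · exact G.loopless.irrefl _
          · intro h; exact ht'i u hu' y hy ((hadj y).2 h)
          · intro h; exact ht'i u hu' x hx ((hadj x).2 h.symm)
          · exact ht'i x hx y hy
        refine ⟨hind, ?_⟩
        intro r hr hsr
        have hFr : IsIndep H (F r) := hFindep r hr
        have hFsub : t ⊆ F r := by
          intro b hb
          rw [hmemF]
          exact hsr (Finset.mem_insert_of_mem ((hmem'' b).1 hb))
        have hFeq : t = F r := htm _ hFr hFsub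
        have : r ⊆ insert v t' := by
          intro w hw
          by_cases hwv : w = v
          · subst hwv; exact Finset.mem_insert_self _ _
          · have : (⟨w, hwv⟩ : ↥S) ∈ F r := (hmemF r _).2 hw
            rw [← hFeq] at this
            exact Finset.mem_insert_of_mem ((hmem'' _).1 this)
        exact (Finset.Subset.antisymm hsr this).symm ▸ rfl
      · ext b
        rw [hmemF, Finset.mem_insert]
        constructor
        · rintro (h | h)
          · exact absurd h b.2
          · exact (hmem'' b).2 h
        · intro hb; exact Or.inr ((hmem'' b).1 hb)
    · -- s = t'
      refine ⟨t', ?_, ?_⟩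
      · refine ⟨ht'i, ?_⟩
        intro r hr hsr
        have hFr : IsIndep H (F r) := hFindep r hr
        have hFsub : t ⊆ F r := by
          intro b hb
          rw [hmemF]
          exact hsr ((hmem'' b).1 hb)
        have hFeq : t = F r := htm _ hFr hFsub
        have hvr : v ∉ r := by
          intro hvr
          have hind : IsIndep H (insert ⟨u, huS⟩ t) := by
            intro x hx y hy
            rw [Finset.mem_insert] at hx hy
            rcases hx with rfl | hx <;> rcases hy with rfl | hy
            · exact H.loopless.irrefl _
            · intro h
              have hy' : (↑y : V) ∈ r := hsr ((hmem'' y).1 hy)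
              exact hr v hvr _ hy' ((hadj ↑y).1 ((hHadj _ _).1 h))
            · intro h
              have hx' : (↑x : V) ∈ r := hsr ((hmem'' x).1 hx)
              exact hr v hvr _ hx' ((hadj ↑x).1 ((hHadj _ _).1 h).symm)
            · exact hti x hx y hy
          have := htm _ hind (Finset.subset_insert _ _)
          have hu_t : (⟨u, huS⟩ : ↥S) ∈ t := by
            rw [this]; exact Finset.mem_insert_self _ _
          exact hu' ((hmem'' _).1 hu_t)
        have : r ⊆ t' := by
          intro w hw
          have hwv : w ≠ v := fun h => hvr (h ▸ hw)
          have : (⟨w, hwv⟩ : ↥S) ∈ F r := (hmemF r _).2 hw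
          rw [← hFeq] at this
          exact (hmem'' _).1 this
        exact Finset.Subset.antisymm hsr this
      · ext b
        rw [hmemF]
        exact (hmem'' b).symm
  have hbij : Set.BijOn F A B := ⟨hmaps, hinj, hsurj⟩
  have h1 : (F '' A).ncard = A.ncard := Set.ncard_image_of_injOn hinj
  have h2 : F '' A = B := hbij.image_eq
  unfold numMaxlIndep
  rw [← hA]
  rw [← h1, h2]
end

section
/- Let G be a graph containing a path t–u–v–w such that deg(u) = deg(v) = 2, the edge uv lies on a cycle, and u lies in at least as many maximal independent sets of G as v does. Let G' be the graph on the same vertex set with edge set E(G) ∪ {tv} − {vw}. Then m(G') ≥ m(G), and moreover if m(G') = m(G) then N_G(w) − {v} ⊆ N_G(t). -/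
attribute [local instance] Classical.propDecidable

private lemma maxl_iff {V : Type*} (G : SimpleGraph V) (s : Finset V) :
    IsMaxlIndep G s ↔ IsIndep G s ∧ ∀ x ∉ s, ∃ y ∈ s, G.Adj x y := by
  constructor
  · rintro ⟨hi, hm⟩
    refine ⟨hi, fun x hx => ?_⟩
    by_contra hno
    push_neg at hno
    have hind : IsIndep G (insert x s) := by
      intro a ha b hb hab
      rcases Finset.mem_insert.mp ha with h | h
      · rcases Finset.mem_insert.mp hb with h' | h'
        · rw [h, h'] at hab
          exact G.loopless.irrefl _ hab
        · rw [h] at hab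
          exact hno b h' hab
      · rcases Finset.mem_insert.mp hb with h' | h'
        · rw [h'] at hab
          exact hno a h hab.symm
        · exact hi a h b h' hab
    have := hm (insert x s) hind (Finset.subset_insert x s)
    exact hx (this ▸ Finset.mem_insert_self x s)
  · rintro ⟨hi, hm⟩
    refine ⟨hi, fun t ht hst => ?_⟩
    apply Finset.Subset.antisymm hst
    intro x hx
    by_contra hxs
    obtain ⟨y, hy, hadj⟩ := hm x hxs
    exact ht x hx y (hst hy) hadj

private lemma exists_maxl {V : Type*} [Fintype V] (G : SimpleGraph V) (s : Finset V)
    (h : IsIndep G s) : ∃ m, s ⊆ m ∧ IsMaxlIndep G m := by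
  classical
  set T := Finset.univ.filter (fun m : Finset V => IsIndep G m ∧ s ⊆ m) with hT
  have hsT : s ∈ T := by simp [hT, h]
  obtain ⟨m, hmT, hmax⟩ := T.exists_max_image Finset.card ⟨s, hsT⟩
  simp only [hT, Finset.mem_filter, Finset.mem_univ, true_and] at hmT
  refine ⟨m, hmT.2, hmT.1, fun t ht hmt => ?_⟩
  have htT : t ∈ T := by
    simp only [hT, Finset.mem_filter, Finset.mem_univ, true_and]
    exact ⟨ht, hmT.2.trans hmt⟩
  exact Finset.eq_of_subset_of_card_le hmt (hmax t htT)

/-- The Moon–Moser transformation lemma (Lemma 2 of the paper). -/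
theorem stmt5 {V : Type*} [Fintype V] (G : SimpleGraph V) (t u v w : V)
    (htu : t ≠ u) (htv : t ≠ v) (htw : t ≠ w) (huv : u ≠ v) (huw : u ≠ w)
    (hvw : v ≠ w)
    (h1 : G.Adj t u) (h2 : G.Adj u v) (h3 : G.Adj v w)
    (hdu : G.degree u = 2) (hdv : G.degree v = 2)
    (hcyc : ∃ p : G.Walk u u, p.IsCycle ∧ s(u, v) ∈ p.edges)
    (hmore : {s : Finset V | IsMaxlIndep G s ∧ v ∈ s}.ncard ≤
      {s : Finset V | IsMaxlIndep G s ∧ u ∈ s}.ncard) :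
    numMaxlIndep G ≤
        numMaxlIndep (SimpleGraph.fromEdgeSet ((G.edgeSet ∪ {s(t, v)}) \ {s(v, w)})) ∧
      (numMaxlIndep (SimpleGraph.fromEdgeSet ((G.edgeSet ∪ {s(t, v)}) \ {s(v, w)})) =
          numMaxlIndep G →
        G.neighborSet w \ {v} ⊆ G.neighborSet t) := by
  classical
  set G' := SimpleGraph.fromEdgeSet ((G.edgeSet ∪ {s(t, v)}) \ {s(v, w)}) with hG'def
  -- adjacency in G'
  have hG' : ∀ a b : V, G'.Adj a b ↔
      ((G.Adj a b ∨ (a = t ∧ b = v) ∨ (a = v ∧ b = t)) ∧ ¬(a = v ∧ b = w) ∧ ¬(a = w ∧ b = v)) := by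
    intro a b
    rw [hG'def, SimpleGraph.fromEdgeSet_adj]
    simp only [Set.mem_diff, Set.mem_union, Set.mem_singleton_iff, SimpleGraph.mem_edgeSet,
      Sym2.eq_iff]
    constructor
    · rintro ⟨⟨h, h2'⟩, _⟩
      exact ⟨h, fun hc => h2' (Or.inl hc), fun hc => h2' (Or.inr hc)⟩
    · rintro ⟨h, ha, hb⟩
      refine ⟨⟨h, fun hc => hc.elim ha hb⟩, ?_⟩
      rcases h with h | ⟨rfl, rfl⟩ | ⟨rfl, rfl⟩
      · exact h.ne
      · exact htv
      · exact fun hh => htv hh.symm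
  -- neighborhood of u in G
  have hNu : ∀ x, G.Adj u x ↔ (x = t ∨ x = v) := by
    have hsub : ({t, v} : Finset V) ⊆ G.neighborFinset u := by
      intro x hx
      rcases Finset.mem_insert.mp hx with rfl | hx
      · exact (SimpleGraph.mem_neighborFinset _ _ _).mpr h1.symm
      · rw [Finset.mem_singleton] at hx; subst hx
        exact (SimpleGraph.mem_neighborFinset _ _ _).mpr h2
    have heq : ({t, v} : Finset V) = G.neighborFinset u := by
      apply Finset.eq_of_subset_of_card_le hsub
      rw [Finset.card_insert_of_notMem (by simpa using htv), Finset.card_singleton]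
      rw [SimpleGraph.card_neighborFinset_eq_degree, hdu]
    intro x
    rw [← SimpleGraph.mem_neighborFinset, ← heq]
    simp
  have hNv : ∀ x, G.Adj v x ↔ (x = u ∨ x = w) := by
    have hsub : ({u, w} : Finset V) ⊆ G.neighborFinset v := by
      intro x hx
      rcases Finset.mem_insert.mp hx with rfl | hx
      · exact (SimpleGraph.mem_neighborFinset _ _ _).mpr h2.symm
      · rw [Finset.mem_singleton] at hx; subst hx
        exact (SimpleGraph.mem_neighborFinset _ _ _).mpr h3
    have heq : ({u, w} : Finset V) = G.neighborFinset v := by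
      apply Finset.eq_of_subset_of_card_le hsub
      rw [Finset.card_insert_of_notMem (by simpa using huw), Finset.card_singleton]
      rw [SimpleGraph.card_neighborFinset_eq_degree, hdv]
    intro x
    rw [← SimpleGraph.mem_neighborFinset, ← heq]
    simp
  -- adjacency facts in G'
  have huG'x : ∀ x, G'.Adj u x ↔ (x = t ∨ x = v) := by
    intro x
    rw [hG']
    constructor
    · rintro ⟨h | ⟨h, _⟩ | ⟨h, _⟩, _, _⟩
      · exact (hNu x).mp h
      · exact absurd h.symm htu
      · exact absurd h huv
    · rintro (rfl | rfl)
      · exact ⟨Or.inl h1.symm, fun hh => huv hh.1, fun hh => huw hh.1⟩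
      · exact ⟨Or.inl h2, fun hh => huv hh.1, fun hh => huw hh.1⟩
  have hvG'x : ∀ x, G'.Adj v x ↔ (x = u ∨ x = t) := by
    intro x
    rw [hG']
    constructor
    · rintro ⟨h | ⟨h, _⟩ | ⟨_, rfl⟩, hnw, _⟩
      · rcases (hNv x).mp h with rfl | rfl
        · exact Or.inl rfl
        · exact absurd ⟨rfl, rfl⟩ hnw
      · exact absurd h.symm htv
      · exact Or.inr rfl
    · rintro (rfl | rfl)
      · exact ⟨Or.inl h2.symm, fun hh => huw hh.2, fun hh => hvw hh.1⟩
      · exact ⟨Or.inr (Or.inr ⟨rfl, rfl⟩), fun hh => htw hh.2, fun hh => hvw hh.1⟩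
  have hfix : ∀ a b, a ≠ v → b ≠ v → (G'.Adj a b ↔ G.Adj a b) := by
    intro a b hav hbv
    rw [hG']
    constructor
    · rintro ⟨h | ⟨_, h⟩ | ⟨h, _⟩, _, _⟩
      · exact h
      · exact absurd h hbv
      · exact absurd h hav
    · intro h
      exact ⟨Or.inl h, fun hh => hav hh.1, fun hh => hbv hh.2⟩
  have htu' : G'.Adj t u := ((huG'x t).mpr (Or.inl rfl)).symm
  have htv' : G'.Adj t v := ((hvG'x t).mpr (Or.inr rfl)).symm
  have huv' : G'.Adj u v := (huG'x v).mpr (Or.inr rfl)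
  -- the partition classes
  set A := {s : Finset V | IsMaxlIndep G s ∧ u ∈ s} with hA
  set B := {s : Finset V | IsMaxlIndep G s ∧ v ∈ s} with hB
  set C := {s : Finset V | IsMaxlIndep G s ∧ u ∉ s ∧ v ∉ s} with hC
  set A' := {s : Finset V | IsMaxlIndep G' s ∧ u ∈ s} with hA'
  set B' := {s : Finset V | IsMaxlIndep G' s ∧ v ∈ s} with hB'
  set C' := {s : Finset V | IsMaxlIndep G' s ∧ t ∈ s} with hC'
  -- counting decomposition for G
  have hGsplit : {s : Finset V | IsMaxlIndep G s} = A ∪ B ∪ C := by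
    ext s
    simp only [Set.mem_union, hA, hB, hC, Set.mem_setOf_eq]
    constructor
    · intro hs
      by_cases hu : u ∈ s
      · exact Or.inl (Or.inl ⟨hs, hu⟩)
      · by_cases hv : v ∈ s
        · exact Or.inl (Or.inr ⟨hs, hv⟩)
        · exact Or.inr ⟨hs, hu, hv⟩
    · rintro ((⟨h, _⟩ | ⟨h, _⟩) | ⟨h, _, _⟩) <;> exact h
  have hcountG : numMaxlIndep G = A.ncard + B.ncard + C.ncard := by
    rw [numMaxlIndep, hGsplit]
    have hd1 : Disjoint A B := by
      rw [Set.disjoint_left]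
      rintro s ⟨hs, hu⟩ ⟨_, hv⟩
      exact hs.1 u hu v hv h2
    have hd2 : Disjoint (A ∪ B) C := by
      rw [Set.disjoint_left]
      rintro s (⟨_, hu⟩ | ⟨_, hv⟩) ⟨_, hnu, hnv⟩
      · exact hnu hu
      · exact hnv hv
    rw [Set.ncard_union_eq hd2 ((A ∪ B).toFinite) C.toFinite,
      Set.ncard_union_eq hd1 A.toFinite B.toFinite]
  -- counting decomposition for G'
  have hG'split : {s : Finset V | IsMaxlIndep G' s} = A' ∪ B' ∪ C' := by
    ext s
    simp only [Set.mem_union, hA', hB', hC', Set.mem_setOf_eq]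
    constructor
    · intro hs
      by_cases hu : u ∈ s
      · exact Or.inl (Or.inl ⟨hs, hu⟩)
      · by_cases hv : v ∈ s
        · exact Or.inl (Or.inr ⟨hs, hv⟩)
        · refine Or.inr ⟨hs, ?_⟩
          obtain ⟨y, hy, hady⟩ := ((maxl_iff G' s).mp hs).2 u hu
          rcases (huG'x y).mp hady with rfl | rfl
          · exact hy
          · exact absurd hy hv
    · rintro ((⟨h, _⟩ | ⟨h, _⟩) | ⟨h, _⟩) <;> exact h
  have hcountG' : numMaxlIndep G' = A'.ncard + B'.ncard + C'.ncard := by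
    rw [numMaxlIndep, hG'split]
    have hd1 : Disjoint A' B' := by
      rw [Set.disjoint_left]
      rintro s ⟨hs, hu⟩ ⟨_, hv⟩
      exact hs.1 u hu v hv huv'
    have hd2 : Disjoint (A' ∪ B') C' := by
      rw [Set.disjoint_left]
      rintro s (⟨hs, hu⟩ | ⟨hs, hv⟩) ⟨_, ht⟩
      · exact hs.1 t ht u hu htu'
      · exact hs.1 t ht v hv htv'
    rw [Set.ncard_union_eq hd2 ((A' ∪ B').toFinite) C'.toFinite,
      Set.ncard_union_eq hd1 A'.toFinite B'.toFinite]
  -- A = A'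
  have hAA' : A = A' := by
    ext s
    simp only [hA, hA', Set.mem_setOf_eq]
    constructor
    · rintro ⟨hs, hu⟩
      have hv : v ∉ s := fun hv => hs.1 u hu v hv h2
      have ht : t ∉ s := fun ht => hs.1 t ht u hu h1
      refine ⟨(maxl_iff G' s).mpr ⟨?_, ?_⟩, hu⟩
      · intro a ha b hb hadj
        rcases ((hG' a b).mp hadj).1 with h | ⟨rfl, rfl⟩ | ⟨rfl, rfl⟩
        · exact hs.1 a ha b hb h
        · exact hv hb
        · exact hv ha
      · intro x hx
        by_cases hxv : x = v
        · subst hxv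
          exact ⟨u, hu, (hvG'x u).mpr (Or.inl rfl)⟩
        · obtain ⟨y, hy, hady⟩ := ((maxl_iff G s).mp hs).2 x hx
          have hyv : y ≠ v := fun hh => hv (hh ▸ hy)
          exact ⟨y, hy, (hfix x y hxv hyv).mpr hady⟩
    · rintro ⟨hs, hu⟩
      have hv : v ∉ s := fun hv => hs.1 u hu v hv huv'
      have ht : t ∉ s := fun ht => hs.1 t ht u hu htu'
      refine ⟨(maxl_iff G s).mpr ⟨?_, ?_⟩, hu⟩
      · intro a ha b hb hadj
        have hav : a ≠ v := fun hh => hv (hh ▸ ha)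
        have hbv : b ≠ v := fun hh => hv (hh ▸ hb)
        exact hs.1 a ha b hb ((hfix a b hav hbv).mpr hadj)
      · intro x hx
        by_cases hxv : x = v
        · subst hxv
          exact ⟨u, hu, h2.symm⟩
        · obtain ⟨y, hy, hady⟩ := ((maxl_iff G' s).mp hs).2 x hx
          have hyv : y ≠ v := fun hh => hv (hh ▸ hy)
          exact ⟨y, hy, (hfix x y hxv hyv).mp hady⟩
  -- C ⊆ C'
  have hCsub : C ⊆ C' := by
    rintro s ⟨hs, hu, hv⟩
    have ht : t ∈ s := by
      obtain ⟨y, hy, hady⟩ := ((maxl_iff G s).mp hs).2 u hu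
      rcases (hNu y).mp hady with rfl | rfl
      · exact hy
      · exact absurd hy hv
    refine ⟨(maxl_iff G' s).mpr ⟨?_, ?_⟩, ht⟩
    · intro a ha b hb hadj
      have hav : a ≠ v := fun hh => hv (hh ▸ ha)
      have hbv : b ≠ v := fun hh => hv (hh ▸ hb)
      exact hs.1 a ha b hb ((hfix a b hav hbv).mp hadj)
    · intro x hx
      by_cases hxv : x = v
      · subst hxv
        exact ⟨t, ht, (hvG'x t).mpr (Or.inr rfl)⟩
      · obtain ⟨y, hy, hady⟩ := ((maxl_iff G s).mp hs).2 x hx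
        have hyv : y ≠ v := fun hh => hv (hh ▸ hy)
        exact ⟨y, hy, (hfix x y hxv hyv).mpr hady⟩
  -- the swap automorphism
  have he1 : Equiv.swap u v u = v := Equiv.swap_apply_left u v
  have he2 : Equiv.swap u v v = u := Equiv.swap_apply_right u v
  have he4 : ∀ x, Equiv.swap u v (Equiv.swap u v x) = x := fun x => Equiv.swap_apply_self u v x
  have hauto : ∀ a b, G'.Adj a b → G'.Adj (Equiv.swap u v a) (Equiv.swap u v b) := by
    have key : ∀ a b, (a = u ∨ a = v) → G'.Adj a b → G'.Adj (Equiv.swap u v a) (Equiv.swap u v b) := by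
      rintro a b (ha | ha) hab
      · rw [ha] at hab
        rcases (huG'x b).mp hab with h | h
        · rw [ha, h, he1, Equiv.swap_apply_of_ne_of_ne htu htv]
          exact (hvG'x t).mpr (Or.inr rfl)
        · rw [ha, h, he1, he2]
          exact (hvG'x u).mpr (Or.inl rfl)
      · rw [ha] at hab
        rcases (hvG'x b).mp hab with h | h
        · rw [ha, h, he2, he1]
          exact (huG'x v).mpr (Or.inr rfl)
        · rw [ha, h, he2, Equiv.swap_apply_of_ne_of_ne htu htv]
          exact (huG'x t).mpr (Or.inl rfl)
    intro a b hab
    by_cases ha : a = u ∨ a = v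
    · exact key a b ha hab
    · by_cases hb : b = u ∨ b = v
      · exact (key b a hb hab.symm).symm
      · push_neg at ha hb
        rw [Equiv.swap_apply_of_ne_of_ne ha.1 ha.2, Equiv.swap_apply_of_ne_of_ne hb.1 hb.2]
        exact hab
  have hFmem : ∀ s : Finset V, IsMaxlIndep G' s → IsMaxlIndep G' (s.image (Equiv.swap u v)) := by
    intro s hs
    rw [maxl_iff] at hs ⊢
    constructor
    · intro a ha b hb hadj
      obtain ⟨a', ha', rfl⟩ := Finset.mem_image.mp ha
      obtain ⟨b', hb', rfl⟩ := Finset.mem_image.mp hb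
      have := hauto _ _ hadj
      rw [he4, he4] at this
      exact hs.1 a' ha' b' hb' this
    · intro x hx
      have hx' : Equiv.swap u v x ∉ s := fun h =>
        hx (Finset.mem_image.mpr ⟨_, h, he4 x⟩)
      obtain ⟨y, hy, hady⟩ := hs.2 _ hx'
      refine ⟨Equiv.swap u v y, Finset.mem_image_of_mem _ hy, ?_⟩
      have := hauto _ _ hady
      rwa [he4] at this
  have hB'img : B' = (fun s : Finset V => s.image (Equiv.swap u v)) '' A' := by
    ext s
    simp only [hA', hB', Set.mem_setOf_eq, Set.mem_image]
    constructor
    · rintro ⟨hs, hvs⟩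
      refine ⟨s.image (Equiv.swap u v), ⟨hFmem s hs, Finset.mem_image.mpr ⟨v, hvs, he2⟩⟩, ?_⟩
      ext x
      simp only [Finset.mem_image]
      constructor
      · rintro ⟨a, ⟨b, hb, rfl⟩, rfl⟩
        rwa [he4]
      · intro hx
        exact ⟨Equiv.swap u v x, ⟨x, hx, rfl⟩, he4 x⟩
    · rintro ⟨s', ⟨hs', hus'⟩, rfl⟩
      exact ⟨hFmem s' hs', Finset.mem_image.mpr ⟨u, hus', he1⟩⟩
  have hB'card : B'.ncard = A'.ncard := by
    rw [hB'img]
    exact Set.ncard_image_of_injective _ (Finset.image_injective (Equiv.injective _))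
  have hCC' : C.ncard ≤ C'.ncard := Set.ncard_le_ncard hCsub C'.toFinite
  have haa : A.ncard = A'.ncard := by rw [hAA']
  constructor
  · rw [hcountG, hcountG']
    omega
  · intro heq
    have hCeq : C = C' := by
      rw [hcountG, hcountG'] at heq
      have hle : C'.ncard ≤ C.ncard := by omega
      exact (Set.eq_of_subset_of_ncard_le hCsub hle C'.toFinite)
    intro x hx
    simp only [Set.mem_diff, Set.mem_singleton_iff, SimpleGraph.mem_neighborSet] at hx ⊢
    obtain ⟨hxw, hxv⟩ := hx
    by_contra hxt
    have hindep : IsIndep G' {t, x} := by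
      intro a ha b hb hadj
      rcases Finset.mem_insert.mp ha with rfl | ha <;>
        rcases Finset.mem_insert.mp hb with h' | h'
      · exact G'.loopless.irrefl _ (h' ▸ hadj)
      · rw [Finset.mem_singleton] at h'; subst h'
        exact hxt ((hfix a b htv hxv).mp hadj)
      · rw [Finset.mem_singleton] at ha; subst ha
        subst h'
        exact hxt ((hfix b a htv hxv).mp hadj.symm)
      · rw [Finset.mem_singleton] at ha h'; subst ha; subst h'
        exact G'.loopless.irrefl _ hadj
    obtain ⟨m, hsm, hm⟩ := exists_maxl G' {t, x} hindep
    have htm : t ∈ m := hsm (Finset.mem_insert_self _ _)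
    have hxm : x ∈ m := hsm (Finset.mem_insert.mpr (Or.inr (Finset.mem_singleton_self _)))
    have hmC : m ∈ C := by
      rw [hCeq]
      exact ⟨hm, htm⟩
    obtain ⟨hmG, hum, hvm⟩ := hmC
    have hwm : w ∈ m := by
      obtain ⟨y, hym, hady⟩ := ((maxl_iff G m).mp hmG).2 v hvm
      rcases (hNv y).mp hady with rfl | rfl
      · exact absurd hym hum
      · exact hym
    exact hmG.1 w hwm x hxm hxw
end

section
/- Under the hypotheses of the previous statement (x and U with G[U] not complete and x ∈ N(u) ⊆ U ∪ {x} for all u ∈ U, |U| ≥ 2), no maximum independent set of G contains x. -/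
attribute [local instance] Classical.propDecidable

/-- `s` is a maximum independent set of vertices of `G`. -/
def IsMaxmIndep {V : Type*} (G : SimpleGraph V) (s : Finset V) : Prop :=
  IsIndep G s ∧ ∀ t : Finset V, IsIndep G t → t.card ≤ s.card

/-- `m'(G)`: the number of maximum independent sets of `G`. -/
noncomputable def numMaxmIndep {V : Type*} [Fintype V] (G : SimpleGraph V) : ℕ :=
  Set.ncard {s : Finset V | IsMaxmIndep G s}

/-- No maximum independent set contains such a vertex . -/
theorem stmt7 {V : Type*} [Fintype V] (G : SimpleGraph V) (x : V) (U : Set V)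
    (hxU : x ∉ U) (hcard : 2 ≤ U.ncard) (hnc : ¬ G.IsClique U)
    (hU : ∀ u ∈ U, G.Adj x u ∧ G.neighborSet u ⊆ U ∪ {x}) :
    ∀ s : Finset V, IsMaxmIndep G s → x ∉ s := by
  intro s ⟨hind, hmax⟩ hxs
  rw [SimpleGraph.isClique_iff, Set.Pairwise] at hnc
  push_neg at hnc
  obtain ⟨u, hu, v, hv, huv, hadj⟩ := hnc
  -- s contains no vertex of U
  have hsU : ∀ w ∈ s, w ∉ U := by
    intro w hw hwU
    exact hind x hxs w hw (hU w hwU).1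
  have hus : u ∉ s := fun h => hsU u h hu
  have hvs : v ∉ s := fun h => hsU v h hv
  -- key: no vertex of s.erase x is adjacent to u or v
  have key : ∀ z, z ∈ U → ∀ w ∈ s.erase x, ¬ G.Adj z w := by
    intro z hz w hw hadj'
    have := (hU z hz).2 hadj'
    rcases this with h | h
    · exact hsU w (Finset.mem_of_mem_erase hw) h
    · exact (Finset.ne_of_mem_erase hw) h
  set t := insert u (insert v (s.erase x)) with ht
  have htind : IsIndep G t := by
    intro a ha b hb hab
    simp only [ht, Finset.mem_insert] at ha hb
    rcases ha with rfl | rfl | ha <;> rcases hb with rfl | rfl | hb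
    · exact G.loopless.irrefl _ hab
    · exact hadj hab
    · exact key a hu b hb hab
    · exact hadj hab.symm
    · exact G.loopless.irrefl _ hab
    · exact key a hv b hb hab
    · exact key b hu a ha hab.symm
    · exact key b hv a ha hab.symm
    · exact hind a (Finset.mem_of_mem_erase ha) b (Finset.mem_of_mem_erase hb) hab
  have hcard' : t.card = s.card + 1 := by
    have hv' : v ∉ s.erase x := fun h => hvs (Finset.mem_of_mem_erase h)
    have hu' : u ∉ insert v (s.erase x) := by
      simp only [Finset.mem_insert]
      rintro (rfl | h)
      · exact huv rfl
      · exact hus (Finset.mem_of_mem_erase h)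
    rw [ht, Finset.card_insert_of_notMem hu', Finset.card_insert_of_notMem hv',
      Finset.card_erase_of_mem hxs]
    have : 1 ≤ s.card := Finset.card_pos.2 ⟨x, hxs⟩
    omega
  have := hmax t htind
  omega
end

section
/- If a finite simple graph G contains a complete subgraph B with at least one vertex adjacent only to other vertices of B, then the number of maximum independent sets of G is at most Σ_{v ∈ V(B)} m'(G − N[v]), where m' counts maximum independent sets. -/
attribute [local instance] Classical.propDecidable

private lemma key_lemma {V : Type*} [Fintype V] (G : SimpleGraph V) (w : V) :
    Set.ncard {s : Finset V | IsMaxmIndep G s ∧ w ∈ s} ≤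
      numMaxmIndep (G.induce {u | u ≠ w ∧ ¬ G.Adj w u}) := by
  classical
  set p : V → Prop := fun u => u ∈ ({u | u ≠ w ∧ ¬ G.Adj w u} : Set V) with hp
  have hpdef : ∀ u, p u ↔ (u ≠ w ∧ ¬ G.Adj w u) := fun u => Iff.rfl
  -- key structural fact
  have hfilter : ∀ s : Finset V, IsIndep G s → w ∈ s → s.filter p = s.erase w := by
    intro s hind hw
    ext u
    simp only [Finset.mem_filter, Finset.mem_erase]
    constructor
    · rintro ⟨hu, hne, -⟩; exact ⟨hne, hu⟩
    · rintro ⟨hne, hu⟩; exact ⟨hu, hne, hind w hw u hu⟩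
  apply Set.ncard_le_ncard_of_injOn (fun s => Finset.subtype p s)
  · rintro s ⟨⟨hind, hmax⟩, hw⟩
    have hcard : (Finset.subtype p s).card = s.card - 1 := by
      rw [Finset.card_subtype, hfilter s hind hw, Finset.card_erase_of_mem hw]
    constructor
    · intro a ha b hb hab
      rw [SimpleGraph.comap_adj] at hab
      exact hind a.1 (Finset.mem_subtype.mp ha) b.1 (Finset.mem_subtype.mp hb) hab
    · intro t' hind'
      set s' : Finset V := insert w (t'.map (Function.Embedding.subtype _)) with hs'
      have hwnot : w ∉ t'.map (Function.Embedding.subtype _) := by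
        intro hmem
        obtain ⟨x, -, hx⟩ := Finset.mem_map.mp hmem
        exact x.2.1 hx
      have hmem' : ∀ u ∈ t'.map (Function.Embedding.subtype _), p u := by
        intro u hu
        obtain ⟨x, -, hx⟩ := Finset.mem_map.mp hu
        rw [← hx]; exact x.2
      have hindS' : IsIndep G s' := by
        intro a ha b hb hab
        rw [hs', Finset.mem_insert] at ha hb
        rcases ha with rfl | ha
        · rcases hb with rfl | hb
          · exact G.loopless.irrefl _ hab
          · exact ((hpdef b).mp (hmem' b hb)).2 hab
        · rcases hb with rfl | hb
          · exact ((hpdef a).mp (hmem' a ha)).2 hab.symm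
          · obtain ⟨x, hx, rfl⟩ := Finset.mem_map.mp ha
            obtain ⟨y, hy, rfl⟩ := Finset.mem_map.mp hb
            exact hind' x hx y hy hab
      have hcard' : s'.card = t'.card + 1 := by
        rw [hs', Finset.card_insert_of_notMem hwnot, Finset.card_map]
      have := hmax s' hindS'
      have hs1 : 0 < s.card := Finset.card_pos.mpr ⟨w, hw⟩
      show t'.card ≤ (Finset.subtype p s).card
      omega
  · rintro s1 ⟨⟨hind1, -⟩, hw1⟩ s2 ⟨⟨hind2, -⟩, hw2⟩ heq
    have h1 : s1 = insert w ((Finset.subtype p s1).map (Function.Embedding.subtype p)) := by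
      rw [Finset.subtype_map, hfilter s1 hind1 hw1, Finset.insert_erase hw1]
    have h2 : s2 = insert w ((Finset.subtype p s2).map (Function.Embedding.subtype p)) := by
      rw [Finset.subtype_map, hfilter s2 hind2 hw2, Finset.insert_erase hw2]
    rw [h1, h2]
    simp only at heq
    rw [heq]

/-- The m'-recursion: for a complete subgraph `B` with a vertex adjacent only
to vertices of `B`, `m'(G) ≤ Σ_{v ∈ B} m'(G - N[v])`. -/
theorem stmt9 {V : Type*} [Fintype V] (G : SimpleGraph V) (B : Finset V)
    (hB : G.IsClique (B : Set V))
    (hv : ∃ v ∈ B, ∀ u : V, G.Adj v u → u ∈ B) :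
    numMaxmIndep G ≤
      ∑ v ∈ B, numMaxmIndep (G.induce {u | u ≠ v ∧ ¬ G.Adj v u}) := by
  classical
  obtain ⟨v0, hv0B, hv0⟩ := hv
  set F : Finset (Finset V) := Finset.univ.filter (fun s => IsMaxmIndep G s) with hF
  have hFc : numMaxmIndep G = F.card := by
    rw [numMaxmIndep]
    have : {s : Finset V | IsMaxmIndep G s} = ↑F := by
      ext s; simp [hF]
    rw [this, Set.ncard_coe_finset]
  -- every maximum independent set meets B
  have hmeets : ∀ s ∈ F, ∃ w ∈ B, w ∈ s := by
    intro s hs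
    rw [hF, Finset.mem_filter] at hs
    obtain ⟨-, hind, hmax⟩ := hs
    by_contra hcon
    push_neg at hcon
    have hv0s : v0 ∉ s := fun h => hcon v0 hv0B h
    have hindins : IsIndep G (insert v0 s) := by
      intro a ha b hb hab
      rw [Finset.mem_insert] at ha hb
      rcases ha with rfl | ha
      · rcases hb with rfl | hb
        · exact G.loopless.irrefl _ hab
        · exact hcon b (hv0 b hab) hb
      · rcases hb with rfl | hb
        · exact hcon a (hv0 a hab.symm) ha
        · exact hind a ha b hb hab
    have := hmax (insert v0 s) hindins
    rw [Finset.card_insert_of_notMem hv0s] at this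
    omega
  have hsub : F ⊆ B.biUnion (fun w => F.filter (fun s => w ∈ s)) := by
    intro s hs
    obtain ⟨w, hwB, hws⟩ := hmeets s hs
    exact Finset.mem_biUnion.mpr ⟨w, hwB, Finset.mem_filter.mpr ⟨hs, hws⟩⟩
  calc numMaxmIndep G = F.card := hFc
    _ ≤ (B.biUnion (fun w => F.filter (fun s => w ∈ s))).card := Finset.card_le_card hsub
    _ ≤ ∑ w ∈ B, (F.filter (fun s => w ∈ s)).card := Finset.card_biUnion_le
    _ ≤ ∑ v ∈ B, numMaxmIndep (G.induce {u | u ≠ v ∧ ¬ G.Adj v u}) := by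
        apply Finset.sum_le_sum
        intro w hw
        have : ((F.filter (fun s => w ∈ s)).card : ℕ) =
            Set.ncard {s : Finset V | IsMaxmIndep G s ∧ w ∈ s} := by
          have : {s : Finset V | IsMaxmIndep G s ∧ w ∈ s} = ↑(F.filter (fun s => w ∈ s)) := by
            ext s; simp [hF, and_comm]
          rw [this, Set.ncard_coe_finset]
        rw [this]
        exact key_lemma G w
end

section
/- For every n ≥ 2, the graph G(n) (the disjoint union of ⌊n/3⌋ triangles adjusted by K₂'s according to n mod 3) has exactly g(n) maximal independent sets, where g(n) = 3^{n/3} if n ≡ 0 (mod 3), g(n) = 4·3^{(n−4)/3} if n ≡ 1 (mod 3), and g(n) = 2·3^{(n−2)/3} if n ≡ 2 (mod 3). -/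
/-! In a disjoint union of cliques, an independent set meets each clique at most once, and it is
maximal exactly when it meets every clique; so maximal independent sets are the choices of one
vertex per clique, and their number is the product of the clique sizes. `G(n)` consists of
`2n mod 3` copies of `K₂` followed by triangles, which gives `2 ^ (2n mod 3) * 3 ^ k` with
`n = 2 (2n mod 3) + 3k`, and this is `g(n)`. -/

attribute [local instance] Classical.propDecidable

/-- Disjoint union of cliques determined by a labelling `f`: two vertices are
adjacent iff they are distinct and carry the same label. -/
def cliqueUnion {V : Type*} (f : V → ℕ) : SimpleGraph V where
  Adj a b := a ≠ b ∧ f a = f b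
  symm := ⟨by rintro a b ⟨h1, h2⟩; exact ⟨h1.symm, h2.symm⟩⟩
  loopless := ⟨by rintro a ⟨h1, _⟩; exact h1 rfl⟩

/-- Component labelling for the graph `G(n)`: `(n/3)K₃` if `n ≡ 0 (mod 3)`,
`2K₂ ⊎ ((n-4)/3)K₃` if `n ≡ 1 (mod 3)`, and `K₂ ⊎ ((n-2)/3)K₃` if
`n ≡ 2 (mod 3)`. -/
def GnLabel (n : ℕ) (i : Fin n) : ℕ :=
  if n % 3 = 0 then (i : ℕ) / 3
  else if n % 3 = 1 then (if (i : ℕ) < 4 then (i : ℕ) / 2 else 2 + ((i : ℕ) - 4) / 3)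
  else (if (i : ℕ) < 2 then 0 else 1 + ((i : ℕ) - 2) / 3)

/-- The Moon–Moser graph `G(n)`. -/
def Gn (n : ℕ) : SimpleGraph (Fin n) := cliqueUnion (GnLabel n)

/-- The Moon–Moser bound `g(n)`. -/
def gval (n : ℕ) : ℕ :=
  if n % 3 = 0 then 3 ^ (n / 3)
  else if n % 3 = 1 then 4 * 3 ^ ((n - 4) / 3)
  else 2 * 3 ^ ((n - 2) / 3)

open Finset

section cliqueUnion

variable {V : Type*} (f : V → ℕ)

lemma isIndep_cliqueUnion_iff {t : Finset V} : IsIndep (cliqueUnion f) t ↔ Set.InjOn f t := by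
  simp only [IsIndep, Set.InjOn, cliqueUnion, mem_coe, not_and, not_imp_not]

lemma isMaxlIndep_cliqueUnion_iff [DecidableEq V] {t : Finset V} :
    IsMaxlIndep (cliqueUnion f) t ↔ Set.InjOn f t ∧ ∀ v, ∃ w ∈ t, f w = f v := by
  simp only [IsMaxlIndep, isIndep_cliqueUnion_iff]
  refine and_congr_right fun hinj => ⟨fun hmax v => ?_, fun hcover s hs hts => ?_⟩
  · by_contra! hv
    have hvt : v ∉ t := fun h => hv v h rfl
    have hins : Set.InjOn f ↑(insert v t) := by
      rw [coe_insert, Set.injOn_insert (mod_cast hvt)]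
      exact ⟨hinj, fun ⟨w, hw, hwv⟩ => hv w hw hwv⟩
    exact hvt ((hmax _ hins (subset_insert v t)) ▸ mem_insert_self v t)
  · refine subset_antisymm hts fun v hv => ?_
    obtain ⟨w, hw, hwv⟩ := hcover v
    rwa [hs (hts hw) hv hwv] at hw

variable [Fintype V] [DecidableEq V]

lemma isMaxlIndep_cliqueUnion_iff_exists_section {t : Finset V} :
    IsMaxlIndep (cliqueUnion f) t ↔
      ∃ σ ∈ Fintype.piFinset fun c : univ.image f => ({v | f v = c} : Finset V),
        univ.image σ = t := by
  simp only [isMaxlIndep_cliqueUnion_iff, Fintype.mem_piFinset, mem_filter, mem_univ, true_and]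
  constructor
  · rintro ⟨hinj, hcover⟩
    have hsec : ∀ c : univ.image f, ∃ w ∈ t, f w = c := fun ⟨c, hc⟩ => by
      obtain ⟨v, -, rfl⟩ := mem_image.1 hc
      exact hcover v
    choose σ hσt hσ using hsec
    refine ⟨σ, hσ, subset_antisymm (image_subset_iff.2 fun c _ => hσt c) fun v hv => ?_⟩
    have hv' : f v ∈ univ.image f := mem_image_of_mem f (mem_univ v)
    exact mem_image.2 ⟨⟨f v, hv'⟩, mem_univ _, hinj (hσt _) hv (hσ _)⟩
  · rintro ⟨σ, hσ, rfl⟩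
    refine ⟨?_, fun v =>
      ⟨σ ⟨f v, mem_image_of_mem f (mem_univ v)⟩, mem_image_of_mem σ (mem_univ _), hσ _⟩⟩
    simp only [coe_image, coe_univ, Set.image_univ]
    rintro _ ⟨c, rfl⟩ _ ⟨c', rfl⟩ h
    rw [Subtype.ext (((hσ c).symm.trans h).trans (hσ c'))]

lemma injOn_image_sections :
    Set.InjOn (fun σ : univ.image f → V => univ.image σ)
      (Fintype.piFinset fun c : univ.image f => ({v | f v = c} : Finset V)) := by
  intro σ hσ τ hτ (h : univ.image σ = univ.image τ)
  simp only [Fintype.coe_piFinset, Set.mem_pi, Set.mem_univ, mem_coe, mem_filter, mem_univ,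
    true_and, forall_const] at hσ hτ
  funext c
  obtain ⟨c', -, hc'⟩ := mem_image.1 (h ▸ mem_image_of_mem σ (mem_univ c))
  rw [← hc']
  exact congrArg τ (Subtype.ext (((hτ c').symm.trans (congrArg f hc')).trans (hσ c)))

theorem numMaxlIndep_cliqueUnion :
    numMaxlIndep (cliqueUnion f) = ∏ c ∈ univ.image f, #{v | f v = c} := by
  have hsets : {t | IsMaxlIndep (cliqueUnion f) t} =
      ↑((Fintype.piFinset fun c : univ.image f => ({v | f v = c} : Finset V)).image
        fun σ => univ.image σ) := by
    ext t
    simp [isMaxlIndep_cliqueUnion_iff_exists_section]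
  rw [numMaxlIndep, hsets, Set.ncard_coe_finset, card_image_of_injOn (injOn_image_sections f),
    Fintype.card_piFinset, prod_coe_sort (univ.image f) fun c => #{v | f v = c}]

end cliqueUnion

lemma numMaxlIndep_cliqueUnion_val (g : ℕ → ℕ) (n : ℕ) :
    numMaxlIndep (cliqueUnion fun i : Fin n => g i) =
      ∏ c ∈ (range n).image g, #{i ∈ range n | g i = c} := by
  rw [numMaxlIndep_cliqueUnion, ← Nat.Iio_eq_range, ← Fin.map_valEmbedding_univ, map_eq_image,
    image_image]
  refine prod_congr rfl fun c _ => ?_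
  rw [filter_image, card_image_of_injective _ Fin.valEmbedding.injective]
  rfl

def blockLabel (d i : ℕ) : ℕ := if i < 2 * d then i / 2 else d + (i - 2 * d) / 3

section blockLabel

variable {n d k : ℕ}

lemma image_blockLabel (hn : n = 2 * d + 3 * k) :
    (range n).image (blockLabel d) = range (d + k) := by
  ext c
  simp only [mem_image, mem_range, blockLabel]
  constructor
  · rintro ⟨i, hi, rfl⟩
    split_ifs <;> omega
  · intro hc
    by_cases hcd : c < d
    · exact ⟨2 * c, by omega, by rw [if_pos (by omega)]; omega⟩
    · exact ⟨2 * d + 3 * (c - d), by omega, by rw [if_neg (by omega)]; omega⟩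

lemma card_blockLabel_fiber_of_lt {c : ℕ} (hc : c < d) (hn : 2 * d ≤ n) :
    #{i ∈ range n | blockLabel d i = c} = 2 := by
  rw [show {i ∈ range n | blockLabel d i = c} = Ico (2 * c) (2 * c + 2) by
    ext i; rw [mem_filter, mem_range, mem_Ico, blockLabel]; split_ifs <;> omega]
  simp

lemma card_blockLabel_fiber_of_le {c : ℕ} (hdc : d ≤ c) (hc : c < d + k)
    (hn : n = 2 * d + 3 * k) : #{i ∈ range n | blockLabel d i = c} = 3 := by
  rw [show {i ∈ range n | blockLabel d i = c} = Ico (3 * c - d) (3 * c - d + 3) by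
    ext i; rw [mem_filter, mem_range, mem_Ico, blockLabel]; split_ifs <;> omega]
  simp

theorem numMaxlIndep_blockLabel (hn : n = 2 * d + 3 * k) :
    numMaxlIndep (cliqueUnion fun i : Fin n => blockLabel d i) = 2 ^ d * 3 ^ k := by
  rw [numMaxlIndep_cliqueUnion_val, image_blockLabel hn, prod_range_add,
    prod_congr rfl fun c hc => card_blockLabel_fiber_of_lt (mem_range.1 hc) (by omega),
    prod_congr rfl fun j hj => card_blockLabel_fiber_of_le (by omega)
      (by rw [mem_range] at hj; omega) hn]
  simp

end blockLabel

/-- `2 * n % 3` is the number of `K₂` components of `G(n)`. -/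
lemma GnLabel_eq_blockLabel (n : ℕ) : GnLabel n = fun i : Fin n => blockLabel (2 * n % 3) i := by
  funext i
  unfold GnLabel blockLabel
  split_ifs <;> omega

lemma gval_eq (n : ℕ) :
    gval n = 2 ^ (2 * n % 3) * 3 ^ ((n - 2 * (2 * n % 3)) / 3) := by
  unfold gval
  split_ifs
  · rw [show 2 * n % 3 = 0 by omega]; simp
  · rw [show 2 * n % 3 = 2 by omega]; norm_num
  · rw [show 2 * n % 3 = 1 by omega]; simp

/-- `G(n)` has exactly `g(n)` maximal independent sets. -/
theorem stmt10 (n : ℕ) (hn : 2 ≤ n) : numMaxlIndep (Gn n) = gval n := by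
  rw [Gn, GnLabel_eq_blockLabel, gval_eq,
    numMaxlIndep_blockLabel (k := (n - 2 * (2 * n % 3)) / 3) (by omega)]
end

section
/- Let n ≥ 6 with n ≡ 0 (mod 3). The graph C(n) = K₃ * ((n−3)/3)K₃, obtained by choosing a vertex v₀ of a triangle and joining v₀ to exactly one vertex of each of (n−3)/3 disjoint triangles, has exactly 2·3^{(n−3)/3} + 2^{(n−3)/3} maximal independent sets. -/
attribute [local instance] Classical.propDecidable

/-- The graph `C(n) = K₃ * ((n-3)/3)K₃` for `n ≡ 0 (mod 3)`, realized on
`Fin n`: vertices `0,1,2` form the central triangle with distinguished vertex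
`v₀ = 0`; the remaining vertices form `(n-3)/3` triangles
`{3j, 3j+1, 3j+2}` (`j ≥ 1`), and `v₀` is joined to the first vertex `3j`
of each of these triangles. -/
def Cn (n : ℕ) : SimpleGraph (Fin n) where
  Adj a b := a ≠ b ∧
    ((if (a : ℕ) < 3 then 0 else 1 + ((a : ℕ) - 3) / 3) =
        (if (b : ℕ) < 3 then 0 else 1 + ((b : ℕ) - 3) / 3) ∨
      ((a : ℕ) = 0 ∧ 3 ≤ (b : ℕ) ∧ (b : ℕ) % 3 = 0) ∨
      ((b : ℕ) = 0 ∧ 3 ≤ (a : ℕ) ∧ (a : ℕ) % 3 = 0))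
  symm := by
    constructor
    rintro a b ⟨h1, h2 | h2 | h2⟩
    · exact ⟨h1.symm, Or.inl h2.symm⟩
    · exact ⟨h1.symm, Or.inr (Or.inr h2)⟩
    · exact ⟨h1.symm, Or.inr (Or.inl h2)⟩
  loopless := by constructor; rintro a ⟨h1, _⟩; exact h1 rfl

/-! Write the vertices of `C(3k+3)` as pairs `(j, r)`, via `finProdFinEquiv : (j, r) ↦ 3j + r`:
triangle `j` (the central one is `j = 0`) and position `r`, where `(j, 0)` is the vertex joined
to `v₀ = (0, 0)`. Each triangle is a clique and `(j, 1)` has no neighbour outside its triangle, so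
a maximal independent set contains exactly one vertex `(j, g j)` of every triangle. Conversely
every such transversal dominates the graph, so it is maximal as soon as it is independent, which
fails exactly when `g 0 = 0` and `g j = 0` for some `j ≠ 0`. This leaves `2 · 3^k` transversals
with `g 0 ≠ 0` and `2^k` with `g 0 = 0`. -/

section MaximalIndependent

variable {V : Type*} {G : SimpleGraph V} {s : Finset V}

lemma isMaxlIndep_iff_dominating :
    IsMaxlIndep G s ↔ IsIndep G s ∧ ∀ v ∉ s, ∃ u ∈ s, G.Adj v u := by
  refine ⟨fun ⟨hind, hmax⟩ => ⟨hind, fun v hv => ?_⟩, fun ⟨hind, hdom⟩ => ⟨hind, ?_⟩⟩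
  · by_contra! hfree
    have hins : IsIndep G (insert v s) := by
      simp only [IsIndep, Finset.mem_insert, forall_eq_or_imp]
      refine ⟨⟨G.loopless.irrefl v, hfree⟩, fun u hu => ⟨fun h => hfree u hu h.symm, hind u hu⟩⟩
    exact hv (hmax _ hins (Finset.subset_insert v s) ▸ Finset.mem_insert_self v s)
  · intro t ht hst
    refine hst.antisymm fun v hvt => ?_
    by_contra hvs
    obtain ⟨u, hus, huv⟩ := hdom v hvs
    exact ht v hvt u (hst hus) huv

end MaximalIndependent

lemma Cn_adj_finProdFinEquiv {k : ℕ} {j j' : Fin (k + 1)} {r r' : Fin 3} :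
    (Cn ((k + 1) * 3)).Adj (finProdFinEquiv (j, r)) (finProdFinEquiv (j', r')) ↔
      (j, r) ≠ (j', r') ∧ (j = j' ∨ r = 0 ∧ r' = 0 ∧ (j = 0 ∨ j' = 0)) := by
  obtain ⟨j, hj⟩ := j; obtain ⟨r, hr⟩ := r; obtain ⟨j', hj'⟩ := j'; obtain ⟨r', hr'⟩ := r'
  change _ ∧ _ ↔ _
  simp only [ne_eq, finProdFinEquiv_apply_val, Fin.ext_iff, Prod.ext_iff, Fin.val_zero]
  split_ifs <;> omega

section Transversal

variable {k : ℕ}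

def transversal (g : Fin (k + 1) → Fin 3) : Finset (Fin ((k + 1) * 3)) :=
  Finset.univ.image fun j => finProdFinEquiv (j, g j)

lemma mem_transversal {g : Fin (k + 1) → Fin 3} {j : Fin (k + 1)} {r : Fin 3} :
    finProdFinEquiv (j, r) ∈ transversal g ↔ g j = r := by
  simp only [transversal, Finset.mem_image, Finset.mem_univ, true_and,
    EmbeddingLike.apply_eq_iff_eq, Prod.mk.injEq]
  exact ⟨fun ⟨_, rfl, h⟩ => h, fun h => ⟨j, rfl, h⟩⟩

lemma transversal_injective : Function.Injective (transversal (k := k)) :=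
  fun _ _ h => funext fun _ => (mem_transversal.1 (h ▸ mem_transversal.2 rfl)).symm

def Admissible (g : Fin (k + 1) → Fin 3) : Prop :=
  g 0 = 0 → ∀ j : Fin k, g j.succ ≠ 0

lemma isIndep_transversal_iff {g : Fin (k + 1) → Fin 3} :
    IsIndep (Cn ((k + 1) * 3)) (transversal g) ↔ Admissible g := by
  constructor
  · intro hind h0 j hj
    refine hind _ (mem_transversal.2 h0) _ (mem_transversal.2 hj)
      (Cn_adj_finProdFinEquiv.2 ⟨?_, Or.inr ⟨rfl, rfl, Or.inl rfl⟩⟩)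
    simp [(Fin.succ_ne_zero j).symm]
  · intro hadm
    simp only [IsIndep, finProdFinEquiv.surjective.forall, Prod.forall, mem_transversal]
    rintro j _ rfl j' _ rfl hadj
    obtain ⟨hne, rfl | ⟨hj, hj', rfl | rfl⟩⟩ := Cn_adj_finProdFinEquiv.1 hadj
    · exact hne rfl
    · rcases Fin.eq_zero_or_eq_succ j' with rfl | ⟨i, rfl⟩
      · exact hne rfl
      · exact hadm hj i hj'
    · rcases Fin.eq_zero_or_eq_succ j with rfl | ⟨i, rfl⟩
      · exact hne rfl
      · exact hadm hj' i hj

lemma transversal_dominating (g : Fin (k + 1) → Fin 3) :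
    ∀ v ∉ transversal g, ∃ u ∈ transversal g, (Cn ((k + 1) * 3)).Adj v u := by
  simp only [finProdFinEquiv.surjective.forall, Prod.forall, mem_transversal]
  intro j r hr
  exact ⟨_, mem_transversal.2 rfl,
    Cn_adj_finProdFinEquiv.2 ⟨fun h => hr (Prod.ext_iff.1 h).2.symm, Or.inl rfl⟩⟩

lemma isMaxlIndep_transversal_iff {g : Fin (k + 1) → Fin 3} :
    IsMaxlIndep (Cn ((k + 1) * 3)) (transversal g) ↔ Admissible g := by
  rw [isMaxlIndep_iff_dominating, isIndep_transversal_iff, and_iff_left (transversal_dominating g)]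

lemma exists_transversal_of_isMaxlIndep {s : Finset (Fin ((k + 1) * 3))}
    (hs : IsMaxlIndep (Cn ((k + 1) * 3)) s) : ∃ g, s = transversal g := by
  obtain ⟨hind, hdom⟩ := isMaxlIndep_iff_dominating.1 hs
  have hmeet : ∀ j, ∃ r, finProdFinEquiv (j, r) ∈ s := by
    intro j
    by_contra! hmiss
    obtain ⟨u, hu, hadj⟩ := hdom _ (hmiss 1)
    obtain ⟨⟨j', r'⟩, rfl⟩ := finProdFinEquiv.surjective u
    obtain ⟨-, rfl | ⟨h10, -⟩⟩ := Cn_adj_finProdFinEquiv.1 hadj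
    · exact hmiss r' hu
    · exact absurd h10 (by decide)
  choose g hg using hmeet
  refine ⟨g, Finset.ext fun v => ?_⟩
  obtain ⟨⟨j, r⟩, rfl⟩ := finProdFinEquiv.surjective v
  rw [mem_transversal]
  refine ⟨fun hv => ?_, fun h => h ▸ hg j⟩
  by_contra hr
  exact hind _ (hg j) _ hv (Cn_adj_finProdFinEquiv.2 ⟨fun h => hr (Prod.ext_iff.1 h).2, Or.inl rfl⟩)

end Transversal

lemma Nat.card_forall_ne {ι α : Type*} [Fintype ι] (a : α) :
    Nat.card {f : ι → α // ∀ i, f i ≠ a} = Nat.card {r : α // r ≠ a} ^ Fintype.card ι := by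
  rw [Nat.card_congr (Equiv.subtypePiEquivPi (p := fun _ r => r ≠ a)), Nat.card_pi,
    Finset.prod_const, Finset.card_univ]

lemma card_admissible (k : ℕ) :
    Nat.card {g : Fin (k + 1) → Fin 3 // Admissible g} = 2 * 3 ^ k + 2 ^ k := by
  rw [Nat.card_eq_fintype_card, Fintype.card_congr ((Fin.consEquiv fun _ => Fin 3).symm.subtypeEquiv
      (p := Admissible) (q := fun p => p.1 = 0 → ∀ j, p.2 j ≠ 0) fun _ => Iff.rfl),
    Fintype.card_subtype, Finset.card_filter, Fintype.sum_prod_type, Fin.sum_univ_three]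
  simp only [Fin.isValue, forall_const, Fin.reduceEq, IsEmpty.forall_iff, ite_true]
  rw [← Finset.card_filter, ← Fintype.card_subtype, Fintype.card_eq_nat_card, Nat.card_forall_ne,
    show Nat.card {r : Fin 3 // r ≠ 0} = 2 by simp]
  simp only [Finset.sum_const, Finset.card_univ, Fintype.card_fun, Fintype.card_fin, smul_eq_mul,
    mul_one]
  ring

/-- `C(n)` has exactly `2·3^{(n-3)/3} + 2^{(n-3)/3}` maximal independent
sets. -/
theorem stmt13 (n : ℕ) (hn : 6 ≤ n) (h3 : n % 3 = 0) :
    numMaxlIndep (Cn n) = 2 * 3 ^ ((n - 3) / 3) + 2 ^ ((n - 3) / 3) := by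
  obtain ⟨k, rfl⟩ : ∃ k, n = (k + 1) * 3 := ⟨n / 3 - 1, by omega⟩
  have hmis : {s | IsMaxlIndep (Cn ((k + 1) * 3)) s} = transversal '' {g | Admissible g} := by
    ext s
    refine ⟨fun hs => ?_, fun ⟨g, hg, hs⟩ => hs ▸ isMaxlIndep_transversal_iff.2 hg⟩
    obtain ⟨g, rfl⟩ := exists_transversal_of_isMaxlIndep hs
    exact ⟨g, isMaxlIndep_transversal_iff.1 hs, rfl⟩
  rw [numMaxlIndep, hmis, Set.ncard_image_of_injective _ transversal_injective,
    ← Nat.card_coe_set_eq, show ((k + 1) * 3 - 3) / 3 = k by omega]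
  exact card_admissible k
end

section
/- Let r ≥ 1 and n ≥ 3r with n ≡ r (mod 2). The connected graph C(n,r) = K₃ * ((r−1)K₃ ⊎ ((n−3r)/2)K₂) has exactly 3^{r−1}·2^{(n−3r+2)/2} + 2^{r−1} maximal independent sets. -/
attribute [local instance] Classical.propDecidable

/-- Component label for `C(n,r)`: vertices `0,1,2` form the central triangle,
vertices `3,…,3r-1` form `r-1` triangles, and vertices `3r,…,n-1` form
`(n-3r)/2` disjoint edges. -/
def CnrLabel (r i : ℕ) : ℕ :=
  if i < 3 then 0 else if i < 3 * r then 1 + (i - 3) / 3 else r + (i - 3 * r) / 2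

/-- `i` is the vertex of its component joined to the distinguished vertex
`v₀ = 0` of the central triangle. -/
def CnrAnchor (r i : ℕ) : Prop :=
  (3 ≤ i ∧ i < 3 * r ∧ i % 3 = 0) ∨ (3 * r ≤ i ∧ (i - 3 * r) % 2 = 0)

/-- The graph `C(n,r) = K₃ * ((r-1)K₃ ⊎ ((n-3r)/2)K₂)` on `Fin n`. -/
def Cnr (n r : ℕ) : SimpleGraph (Fin n) where
  Adj a b := a ≠ b ∧
    (CnrLabel r (a : ℕ) = CnrLabel r (b : ℕ) ∨
      ((a : ℕ) = 0 ∧ CnrAnchor r (b : ℕ)) ∨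
      ((b : ℕ) = 0 ∧ CnrAnchor r (a : ℕ)))
  symm := by
    constructor
    rintro a b ⟨h1, h2 | h2 | h2⟩
    · exact ⟨h1.symm, Or.inl h2.symm⟩
    · exact ⟨h1.symm, Or.inr (Or.inr h2)⟩
    · exact ⟨h1.symm, Or.inr (Or.inl h2)⟩
  loopless := by constructor; rintro a ⟨h1, _⟩; exact h1 rfl

/-!
A maximal independent set of `K₃ * H` meets every clique component exactly once: a component it
misses contains a vertex adjacent to nothing outside its component, which could be added. The only
other constraint is that the hub `v₀` excludes the anchors. So maximal independent sets are the
choice functions on components that avoid anchors when they pick `v₀`. Those picking `v₀` have two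
choices in each further triangle and one in each edge, `2^(r-1)` in all; the others have two
choices in the central triangle and every choice elsewhere, `2 · 3^(r-1) · 2^k` with `n = 3r + 2k`.
-/

open Finset

section CliqueUnionWithHub

variable {V ι : Type*}

def cliqueUnionWithHub (lab : V → ι) (v₀ : V) (A : V → Prop) : SimpleGraph V :=
  SimpleGraph.fromRel fun u v => lab u = lab v ∨ (u = v₀ ∧ A v)

variable {lab : V → ι} {v₀ : V} {A : V → Prop}

lemma isIndep_cliqueUnionWithHub_iff (hA : ¬ A v₀) {s : Finset V} :
    IsIndep (cliqueUnionWithHub lab v₀ A) s ↔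
      (∀ v ∈ s, ∀ w ∈ s, lab v = lab w → v = w) ∧ (v₀ ∈ s → ∀ w ∈ s, ¬ A w) := by
  simp only [IsIndep, cliqueUnionWithHub, SimpleGraph.fromRel_adj]
  constructor
  · intro h
    refine ⟨fun v hv w hw hl => by_contra fun hne => h v hv w hw ⟨hne, .inl (.inl hl)⟩,
      fun h₀ w hw hAw => h v₀ h₀ w hw ⟨?_, .inl (.inr ⟨rfl, hAw⟩)⟩⟩
    rintro rfl
    exact hA hAw
  · rintro ⟨hlab, hhub⟩ u hu v hv ⟨hne, (hl | ⟨rfl, hAv⟩) | (hl | ⟨rfl, hAu⟩)⟩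
    · exact hne (hlab u hu v hv hl)
    · exact hhub hu v hv hAv
    · exact hne (hlab u hu v hv hl.symm)
    · exact hhub hv u hu hAu

lemma isMaxlIndep_cliqueUnionWithHub_iff [DecidableEq V] (hA : ¬ A v₀)
    (hfree : ∀ c, ∃ v, lab v = c ∧ v ≠ v₀ ∧ ¬ A v) {s : Finset V} :
    IsMaxlIndep (cliqueUnionWithHub lab v₀ A) s ↔
      (∀ v ∈ s, ∀ w ∈ s, lab v = lab w → v = w) ∧ (∀ c, ∃ v ∈ s, lab v = c) ∧
        (v₀ ∈ s → ∀ w ∈ s, ¬ A w) := by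
  simp only [IsMaxlIndep, isIndep_cliqueUnionWithHub_iff hA]
  constructor
  · rintro ⟨⟨hlab, hhub⟩, hmax⟩
    refine ⟨hlab, fun c => ?_, hhub⟩
    by_contra! hc
    obtain ⟨f, hfc, hf₀, hAf⟩ := hfree c
    have hins : s = insert f s := by
      refine hmax _ ⟨?_, ?_⟩ (subset_insert f s)
      · simp only [mem_insert]
        rintro v (rfl | hv) w (rfl | hw) hl
        · rfl
        · exact absurd (hl ▸ hfc) (hc w hw)
        · exact absurd (hl ▸ hfc) (hc v hv)
        · exact hlab v hv w hw hl
      · simp only [mem_insert, hf₀.symm, false_or]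
        rintro h₀ w (rfl | hw)
        exacts [hAf, hhub h₀ w hw]
    exact hc f (hins ▸ mem_insert_self f s) hfc
  · rintro ⟨hlab, hsurj, hhub⟩
    refine ⟨⟨hlab, hhub⟩, fun t ⟨htlab, _⟩ hst => Subset.antisymm hst fun v hv => ?_⟩
    obtain ⟨w, hw, hwv⟩ := hsurj (lab v)
    exact htlab w (hst hw) v hv hwv ▸ hw

lemma exists_section_iff [Fintype ι] [DecidableEq V] {s : Finset V} :
    ((∀ v ∈ s, ∀ w ∈ s, lab v = lab w → v = w) ∧ ∀ c, ∃ v ∈ s, lab v = c) ↔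
      ∃ σ : ι → V, (∀ c, lab (σ c) = c) ∧ univ.image σ = s := by
  constructor
  · rintro ⟨hlab, hsurj⟩
    choose σ hσs hσ using hsurj
    refine ⟨σ, hσ, Subset.antisymm (by simpa [subset_iff] using hσs) fun v hv => ?_⟩
    exact mem_image.2 ⟨lab v, mem_univ _, hlab _ (hσs _) v hv (hσ _)⟩
  · rintro ⟨σ, hσ, rfl⟩
    simp only [mem_image, mem_univ, true_and, forall_exists_index, forall_apply_eq_imp_iff]
    exact ⟨fun c d h => by rw [hσ, hσ] at h; rw [h], fun c => ⟨σ c, ⟨c, rfl⟩, hσ c⟩⟩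

lemma isMaxlIndep_cliqueUnionWithHub_iff_exists_section [Fintype ι] [DecidableEq V]
    (hA : ¬ A v₀) (hfree : ∀ c, ∃ v, lab v = c ∧ v ≠ v₀ ∧ ¬ A v) {s : Finset V} :
    IsMaxlIndep (cliqueUnionWithHub lab v₀ A) s ↔
      ∃ σ : ι → V, (∀ c, lab (σ c) = c) ∧ (σ (lab v₀) = v₀ → ∀ c, ¬ A (σ c)) ∧
        univ.image σ = s := by
  rw [isMaxlIndep_cliqueUnionWithHub_iff hA hfree, ← and_assoc, exists_section_iff]
  constructor
  · rintro ⟨⟨σ, hσ, rfl⟩, hhub⟩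
    refine ⟨σ, hσ, fun h₀ c => hhub ?_ _ (mem_image_of_mem σ (mem_univ c)), rfl⟩
    exact h₀ ▸ mem_image_of_mem σ (mem_univ _)
  · rintro ⟨σ, hσ, hhub, rfl⟩
    refine ⟨⟨σ, hσ, rfl⟩, fun h₀ => ?_⟩
    obtain ⟨c, -, hc⟩ := mem_image.1 h₀
    simpa using hhub (by rw [← hc, hσ])

lemma injOn_image_sections_s14 [Fintype ι] [DecidableEq V] :
    Set.InjOn (fun σ : ι → V => univ.image σ) {σ | ∀ c, lab (σ c) = c} := by
  intro σ hσ τ hτ h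
  funext c
  have hc : σ c ∈ univ.image τ := (show univ.image σ = univ.image τ from h) ▸
    mem_image_of_mem σ (mem_univ c)
  obtain ⟨d, -, hd⟩ := mem_image.1 hc
  have : d = c := by rw [← hσ c, ← hd, hτ]
  rw [← hd, this]

lemma card_filter_piFinset_imp {ι V : Type*} [Fintype ι] [DecidableEq ι] [DecidableEq V]
    (t : ι → Finset V) {c₀ : ι} {v₀ : V} (hv₀ : v₀ ∈ t c₀) (P : V → Prop) [DecidablePred P]
    (hP : P v₀) :
    #{σ ∈ Fintype.piFinset t | σ c₀ = v₀ → ∀ c, P (σ c)} =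
      #((t c₀).erase v₀) * ∏ c ∈ univ.erase c₀, #(t c) +
        ∏ c ∈ univ.erase c₀, #{v ∈ t c | P v} := by
  have hsplit : {σ ∈ Fintype.piFinset t | σ c₀ = v₀ → ∀ c, P (σ c)} =
      Fintype.piFinset (Function.update t c₀ ((t c₀).erase v₀)) ∪
        Fintype.piFinset (Function.update (fun c => {v ∈ t c | P v}) c₀ {v₀}) := by
    ext σ
    simp only [mem_filter, mem_union, Fintype.mem_piFinset, Function.update_apply]
    by_cases h₀ : σ c₀ = v₀
    · have : ¬ ∀ c, σ c ∈ if c = c₀ then (t c₀).erase v₀ else t c := fun h => by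
        simpa [h₀] using h c₀
      simp only [this, false_or]
      constructor
      · rintro ⟨hσ, hP⟩ c
        split_ifs with hc
        · exact mem_singleton.2 (hc ▸ h₀)
        · exact mem_filter.2 ⟨hσ c, hP h₀ c⟩
      · intro hσ
        refine ⟨fun c => ?_, fun _ c => ?_⟩ <;> have := hσ c <;> split_ifs at this with hc
        · exact hc ▸ h₀ ▸ hv₀
        · exact (mem_filter.1 this).1
        · exact hc ▸ h₀ ▸ hP
        · exact (mem_filter.1 this).2
    · have : ¬ ∀ c, σ c ∈ if c = c₀ then {v₀} else {v ∈ t c | P v} := fun h => h₀ <| by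
        simpa using h c₀
      simp only [h₀, this, IsEmpty.forall_iff, and_true, or_false]
      refine forall_congr' fun c => ?_
      split_ifs with hc
      · subst hc
        simp [h₀]
      · rfl
  have hdisj : Disjoint (Fintype.piFinset (Function.update t c₀ ((t c₀).erase v₀)))
      (Fintype.piFinset (Function.update (fun c => {v ∈ t c | P v}) c₀ {v₀})) := by
    refine disjoint_left.2 fun σ h₁ h₂ => ?_
    have h₁ := Fintype.mem_piFinset.1 h₁ c₀
    have h₂ := Fintype.mem_piFinset.1 h₂ c₀
    simp only [Function.update_self, mem_erase, mem_singleton] at h₁ h₂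
    exact h₁.1 h₂
  rw [hsplit, card_union_of_disjoint hdisj, Fintype.card_piFinset, Fintype.card_piFinset]
  simp only [Function.apply_update (fun _ s => #s), prod_update_of_mem (mem_univ c₀),
    sdiff_singleton_eq_erase, card_singleton, one_mul]

theorem numMaxlIndep_cliqueUnionWithHub [Fintype V] [Fintype ι] [DecidableEq V] [DecidableEq ι]
    [DecidablePred A] (hA : ¬ A v₀) (hfree : ∀ c, ∃ v, lab v = c ∧ v ≠ v₀ ∧ ¬ A v) :
    numMaxlIndep (cliqueUnionWithHub lab v₀ A) =
      #(({v | lab v = lab v₀} : Finset V).erase v₀) *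
          ∏ c ∈ univ.erase (lab v₀), #{v | lab v = c} +
        ∏ c ∈ univ.erase (lab v₀), #{v | lab v = c ∧ ¬ A v} := by
  set S := {σ ∈ Fintype.piFinset fun c => ({v | lab v = c} : Finset V) |
    σ (lab v₀) = v₀ → ∀ c, ¬ A (σ c)}
  have hS : {s | IsMaxlIndep (cliqueUnionWithHub lab v₀ A) s} =
      ↑(S.image fun σ => univ.image σ) := by
    ext s
    simp [isMaxlIndep_cliqueUnionWithHub_iff_exists_section hA hfree, S, and_assoc]
  have hinj : Set.InjOn (fun σ : ι → V => univ.image σ) S := injOn_image_sections_s14.mono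
    fun σ hσ => by simpa [S] using (mem_filter.1 hσ).1
  rw [numMaxlIndep, hS, Set.ncard_coe_finset, card_image_of_injOn hinj]
  exact (card_filter_piFinset_imp _ (by simp) (fun v => ¬ A v) hA).trans
    (by simp only [filter_filter])

end CliqueUnionWithHub

section Cnr

variable {r k : ℕ}

def cnrStart (r c : ℕ) : ℕ := if c ≤ r then 3 * c else 3 * r + 2 * (c - r)

lemma cnrLabel_eq_iff (hr : 1 ≤ r) {i c : ℕ} :
    CnrLabel r i = c ↔ cnrStart r c ≤ i ∧ i < cnrStart r (c + 1) := by
  unfold CnrLabel cnrStart; split_ifs <;> omega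

lemma cnrAnchor_iff (hr : 1 ≤ r) {i : ℕ} :
    CnrAnchor r i ↔ 3 ≤ i ∧ i = cnrStart r (CnrLabel r i) := by
  unfold CnrAnchor CnrLabel cnrStart; split_ifs <;> omega

lemma cnrLabel_lt (hr : 1 ≤ r) {i : ℕ} (hi : i < 3 * r + 2 * k) : CnrLabel r i < r + k := by
  unfold CnrLabel; split_ifs <;> omega

lemma cnrStart_add_one_lt (r c : ℕ) : cnrStart r c + 1 < cnrStart r (c + 1) := by
  unfold cnrStart; split_ifs <;> omega

lemma cnrStart_succ_le {c : ℕ} (hc : c < r + k) : cnrStart r (c + 1) ≤ 3 * r + 2 * k := by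
  unfold cnrStart; split_ifs <;> omega

def cnrComponent (hr : 1 ≤ r) (v : Fin (3 * r + 2 * k)) : Fin (r + k) :=
  ⟨CnrLabel r v, cnrLabel_lt hr v.2⟩

lemma cnrComponent_zero (hr : 1 ≤ r) :
    cnrComponent (k := k) hr ⟨0, by omega⟩ = ⟨0, by omega⟩ :=
  Fin.ext (by simp [cnrComponent, CnrLabel])

lemma cnr_eq_cliqueUnionWithHub (hr : 1 ≤ r) :
    Cnr (3 * r + 2 * k) r =
      cliqueUnionWithHub (cnrComponent hr) ⟨0, by omega⟩ fun v => CnrAnchor r v := by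
  ext u v
  simp only [Cnr, cliqueUnionWithHub, SimpleGraph.fromRel_adj, cnrComponent, Fin.ext_iff]
  grind

lemma card_cnrComponent_fiber (hr : 1 ≤ r) (c : Fin (r + k)) :
    #{v | cnrComponent hr v = c} = if (c : ℕ) < r then 3 else 2 := by
  have : ({v | cnrComponent hr v = c} : Finset _) =
      (Ico (cnrStart r c) (cnrStart r (c + 1))).attachFin
        fun _ hi => (mem_Ico.1 hi).2.trans_le (cnrStart_succ_le c.2) := by
    ext v
    simp [cnrComponent, Fin.ext_iff, mem_attachFin, cnrLabel_eq_iff hr]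
  rw [this, card_attachFin, Nat.card_Ico]
  unfold cnrStart; split_ifs <;> omega

lemma card_cnrComponent_fiber_not_anchor (hr : 1 ≤ r) {c : Fin (r + k)}
    (hc : c ≠ ⟨0, by omega⟩) :
    #{v | cnrComponent hr v = c ∧ ¬ CnrAnchor r v} = if (c : ℕ) < r then 2 else 1 := by
  have h3 : 3 ≤ cnrStart r c := by
    have : (c : ℕ) ≠ 0 := fun h => hc (Fin.ext h)
    unfold cnrStart; split_ifs <;> omega
  have : ({v | cnrComponent hr v = c ∧ ¬ CnrAnchor r v} : Finset _) =
      (Ico (cnrStart r c + 1) (cnrStart r (c + 1))).attachFin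
        fun _ hi => (mem_Ico.1 hi).2.trans_le (cnrStart_succ_le c.2) := by
    ext v
    simp only [cnrComponent, Fin.ext_iff, mem_filter, mem_univ, true_and, mem_attachFin, mem_Ico,
      cnrAnchor_iff hr]
    constructor
    · rintro ⟨hv, hnot⟩
      rw [hv] at hnot
      have := (cnrLabel_eq_iff hr).1 hv
      omega
    · intro hv
      have hlab : CnrLabel r v = c := (cnrLabel_eq_iff hr).2 ⟨by omega, hv.2⟩
      rw [hlab]
      exact ⟨rfl, fun h => by omega⟩
  rw [this, card_attachFin, Nat.card_Ico]
  unfold cnrStart; split_ifs <;> omega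

lemma exists_cnrComponent_eq_not_anchor (hr : 1 ≤ r) (c : Fin (r + k)) :
    ∃ v, cnrComponent hr v = c ∧ v ≠ ⟨0, by omega⟩ ∧ ¬ CnrAnchor r v := by
  have hlab : CnrLabel r (cnrStart r c + 1) = c :=
    (cnrLabel_eq_iff hr).2 ⟨by omega, cnrStart_add_one_lt r c⟩
  have hlt := (cnrStart_add_one_lt r c).trans_le (cnrStart_succ_le c.2)
  refine ⟨⟨cnrStart r c + 1, hlt⟩, Fin.ext hlab, fun h => by simp [Fin.ext_iff] at h, ?_⟩
  show ¬ CnrAnchor r (cnrStart r c + 1)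
  rw [cnrAnchor_iff hr, hlab]
  omega

lemma prod_erase_zero_ite (hr : 1 ≤ r) (a b : ℕ) :
    ∏ c ∈ (univ : Finset (Fin (r + k))).erase ⟨0, by omega⟩, (if (c : ℕ) < r then a else b) =
      a ^ (r - 1) * b ^ k := by
  have hmap : ((univ : Finset (Fin (r + k))).erase ⟨0, by omega⟩).map Fin.valEmbedding =
      Ico 1 (r + k) := by
    ext i
    simp only [mem_map, mem_erase, mem_univ, and_true, Fin.valEmbedding_apply, mem_Ico]
    exact ⟨by rintro ⟨c, hc, rfl⟩; exact ⟨Nat.one_le_iff_ne_zero.2 fun h => hc (Fin.ext h), c.2⟩,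
      fun hi => ⟨⟨i, hi.2⟩, fun h => by simp [Fin.ext_iff] at h; omega, rfl⟩⟩
  have hprod := prod_map ((univ : Finset (Fin (r + k))).erase ⟨0, by omega⟩) Fin.valEmbedding
    fun i => if i < r then a else b
  rw [hmap, Fin.valEmbedding_apply] at hprod
  rw [← hprod,
    ← prod_Ico_consecutive _ hr (Nat.le_add_right r k),
    prod_eq_pow_card fun i hi => if_pos (mem_Ico.1 hi).2,
    prod_eq_pow_card fun i hi => if_neg (not_lt.2 (mem_Ico.1 hi).1), Nat.card_Ico, Nat.card_Ico,
    Nat.add_sub_cancel_left]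

end Cnr

/-- `C(n,r)` has exactly `3^{r-1}·2^{(n-3r+2)/2} + 2^{r-1}` maximal
independent sets. -/
theorem stmt14 (n r : ℕ) (hr : 1 ≤ r) (hn : 3 * r ≤ n) (hpar : n % 2 = r % 2) :
    numMaxlIndep (Cnr n r) =
      3 ^ (r - 1) * 2 ^ ((n - 3 * r + 2) / 2) + 2 ^ (r - 1) := by
  obtain ⟨k, rfl⟩ : ∃ k, n = 3 * r + 2 * k := ⟨(n - 3 * r) / 2, by omega⟩
  rw [cnr_eq_cliqueUnionWithHub hr,
    numMaxlIndep_cliqueUnionWithHub (by simp [CnrAnchor]; omega)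
      (exists_cnrComponent_eq_not_anchor hr),
    cnrComponent_zero, card_erase_of_mem (by simp [cnrComponent_zero]),
    card_cnrComponent_fiber, prod_congr rfl fun c _ => card_cnrComponent_fiber hr c,
    prod_congr rfl fun c hc => card_cnrComponent_fiber_not_anchor hr (ne_of_mem_erase hc),
    prod_erase_zero_ite hr, prod_erase_zero_ite hr, one_pow, mul_one,
    if_pos (show ((⟨0, by omega⟩ : Fin (r + k)) : ℕ) < r from hr),
    show (3 * r + 2 * k - 3 * r + 2) / 2 = k + 1 by omega]
  ring
end
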